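/- arXiv:1203.2260 — 7 statements merged into one kernel-verified Lean document; each statement's English description precedes it below -/
import Mathlib

section
/- Let A be a compact Hausdorff second-countable abelian group with normalized Haar probability measure μ, let n ≥ 1, and let F = (f_v)_{v ∈ K_n} be a system of bounded Borel measurable functions on A. Then for every j ∈ {1,…,n} and every x ∈ A, |[F](x)| ≤ (∏_{v ∈ K_n, v_j = 0} ‖f_v‖_∞) · (∏_{v ∈ K_n, v_j = 1} ‖f_v‖_{U_n}). -/
/-!
Split the edge vector `t` into its `j`-th coordinate `a` and the remaining edges `t'`. The factors
with `v_j = 0` do not involve `a`, and for `v ≠ 0` the map `t' ↦ x + v·t'` pushes the product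
measure forward to `μ`, so these factors are bounded a.e. by `‖f_v‖_∞`. Integrating the factors
with `v_j = 1` over `a` gives, by translation invariance, a function `R(t')` independent of `x`,
and `(∫ |R|)² ≤ ∫ |R|²` is the Gowers inner product of the system `v ↦ f_{v with v_j := 1}`. The
Gowers–Cauchy–Schwarz inequality, proved by the same splitting followed by Cauchy–Schwarz in each
direction in turn, bounds it by `∏_{v_j = 1} ‖f_v‖_{U_n}²`.
-/

open MeasureTheory
open scoped BigOperators

/-- The `⋆` operation: conjugate a complex number iff the natural number parameter is odd. -/
noncomputable def cstar (m : ℕ) (z : ℂ) : ℂ := if Even m then z else (starRingEnd ℂ) z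

/-- The height `h(v)` of a cube vertex `v ∈ {0,1}^k`: the number of `1` coordinates. -/
def ht {k : ℕ} (v : Fin k → Bool) : ℕ := (Finset.univ.filter (fun i => v i = true)).card

/-- The point `x + v₁t₁ + ⋯ + v_k t_k` of the cube with base `x` and edges `t`. -/
def vertexPoint {A : Type*} [AddCommGroup A] {k : ℕ} (x : A) (t : Fin k → A)
    (v : Fin k → Bool) : A := x + ∑ i, if v i then t i else 0

/-- The Gowers integral
`G_k(f) = ∫_{A^{k+1}} ∏_{v ∈ {0,1}^k} C^{h(v)} f(x + v₁t₁ + ⋯ + v_k t_k) dμ(x)dμ(t₁)⋯dμ(t_k)`,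
so that `‖f‖_{U_k}^{2^k} = G_k(f)`. -/
noncomputable def gowersIntegral {A : Type*} [AddCommGroup A] [MeasurableSpace A]
    (μ : Measure A) (k : ℕ) (f : A → ℂ) : ℂ :=
  ∫ x, ∫ t : Fin k → A, ∏ v : Fin k → Bool, cstar (ht v) (f (vertexPoint x t v))
    ∂(Measure.pi fun _ => μ) ∂μ


/-- The Gowers uniformity norm `‖f‖_{U_k} = G_k(f)^{1/2^k}`. -/
noncomputable def gowersNorm {A : Type*} [AddCommGroup A] [MeasurableSpace A]
    (μ : Measure A) (k : ℕ) (f : A → ℂ) : ℝ :=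
  (gowersIntegral μ k f).re ^ ((1 : ℝ) / 2 ^ k)

/-- The corner convolution `[F]` of a system `F = (f_v)_{v ∈ K_n}` of functions on `A`,
indexed by the nonzero vertices `K_n = {0,1}^n \ {0}`:
`[F](x) = ∫_{A^n} ∏_{v ∈ K_n} C^{h(v)} f_v(x + v₁t₁ + ⋯ + v_n t_n) dμ(t₁)⋯dμ(t_n)`. -/
noncomputable def cornerConv {A : Type*} [AddCommGroup A] [MeasurableSpace A]
    (μ : Measure A) (n : ℕ) (F : (Fin n → Bool) → A → ℂ) (x : A) : ℂ :=
  ∫ t : Fin n → A,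
    ∏ v ∈ Finset.univ.filter (fun v : Fin n → Bool => v ≠ fun _ => false),
      cstar (ht v) (F v (vertexPoint x t v))
    ∂(Measure.pi fun _ => μ)

open Function

section Cube

variable {A : Type*} [AddCommGroup A]

lemma continuous_cstar (m : ℕ) : Continuous (cstar m) := by
  unfold cstar
  split_ifs
  · exact continuous_id
  · exact Complex.continuous_conj

lemma norm_cstar (m : ℕ) (z : ℂ) : ‖cstar m z‖ = ‖z‖ := by
  unfold cstar; split_ifs <;> simp

lemma cstar_succ (m : ℕ) (z : ℂ) : cstar (m + 1) z = starRingEnd ℂ (cstar m z) := by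
  by_cases h : Even m <;> simp [cstar, h, Nat.even_add_one]

lemma ht_update_true {k : ℕ} (v : Fin k → Bool) (j : Fin k) :
    ht (update v j true) = ht (update v j false) + 1 := by
  unfold ht
  rw [← Finset.card_insert_of_notMem (s := Finset.univ.filter _) (a := j) (by simp)]
  congr 1
  ext i
  by_cases hij : i = j <;> simp [update_apply, hij]

lemma cstar_ht_update_of_ne {k : ℕ} {v : Fin k → Bool} {j : Fin k} {b : Bool} (hb : b ≠ v j)
    (z : ℂ) : cstar (ht (update v j b)) z = starRingEnd ℂ (cstar (ht v) z) := by
  conv_rhs => rw [← update_eq_self j v]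
  cases b <;> cases hv : v j <;> simp only [hv, ne_eq, not_true_eq_false] at hb ⊢
  · rw [ht_update_true, cstar_succ, Complex.conj_conj]
  · rw [ht_update_true, cstar_succ]

lemma vertexPoint_insertNth {m : ℕ} (j : Fin (m + 1)) (x a : A) (t : Fin m → A)
    (v : Fin (m + 1) → Bool) :
    vertexPoint x (j.insertNth a t) v
      = vertexPoint (x + if v j then a else 0) t (v ∘ j.succAbove) := by
  simp only [vertexPoint, Fin.sum_univ_succAbove _ j, Fin.insertNth_apply_same,
    Fin.insertNth_apply_succAbove, comp_apply]
  abel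

noncomputable def cubeProd {k : ℕ} (s : Finset (Fin k → Bool)) (G : (Fin k → Bool) → A → ℂ)
    (x : A) (t : Fin k → A) : ℂ :=
  ∏ v ∈ s, cstar (ht v) (G v (vertexPoint x t v))

noncomputable def sliceProd {m : ℕ} (j : Fin (m + 1)) (s : Finset (Fin (m + 1) → Bool))
    (G : (Fin (m + 1) → Bool) → A → ℂ) (y : A) (t : Fin m → A) : ℂ :=
  ∏ v ∈ s, cstar (ht v) (G v (vertexPoint y t (v ∘ j.succAbove)))

lemma cubeProd_insertNth {m : ℕ} (j : Fin (m + 1)) (s : Finset (Fin (m + 1) → Bool))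
    (G : (Fin (m + 1) → Bool) → A → ℂ) (x a : A) (t : Fin m → A) :
    cubeProd s G x (j.insertNth a t)
      = sliceProd j (s.filter (· j = false)) G x t
        * sliceProd j (s.filter (· j = true)) G (x + a) t := by
  rw [cubeProd, ← Finset.prod_filter_mul_prod_filter_not s (· j = false)]
  simp only [Bool.not_eq_false]
  congr 1 <;> refine Finset.prod_congr rfl fun v hv => ?_ <;>
    simp only [Finset.mem_filter] at hv <;> simp [vertexPoint_insertNth, hv.2]

end Cube

section Measure

lemma integral_pi_insertNth {α E : Type*} [MeasurableSpace α] [NormedAddCommGroup E]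
    [NormedSpace ℝ E] (μ : Measure α) [SigmaFinite μ] {m : ℕ} (j : Fin (m + 1))
    {φ : (Fin (m + 1) → α) → E} (hφ : Integrable φ (Measure.pi fun _ => μ)) :
    ∫ t, φ t ∂(Measure.pi fun _ => μ)
      = ∫ t, ∫ a, φ (j.insertNth a t) ∂μ ∂(Measure.pi fun _ => μ) := by
  have he := (measurePreserving_piFinSuccAbove (fun _ : Fin (m + 1) => μ) j).symm
  rw [← he.integral_comp', integral_prod_symm]
  · rfl
  · exact (he.integrable_comp_emb (MeasurableEquiv.measurableEmbedding _)).mpr hφ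

variable {A : Type*} [AddCommGroup A] [MeasurableSpace A] [MeasurableAdd₂ A]
  {μ : Measure A} [μ.IsAddLeftInvariant]

lemma measurePreserving_comp_snd_add_fst {β : Type*} [MeasurableSpace β] {ν : Measure β}
    [IsProbabilityMeasure ν] [SFinite μ] {g : β → A} (hg : Measurable g) :
    MeasurePreserving (fun p : A × β => g p.2 + p.1) (μ.prod ν) μ := by
  have hm : Measurable fun p : A × β => g p.2 + p.1 := (hg.comp measurable_snd).add measurable_fst
  refine ⟨hm, Measure.ext fun s hs => ?_⟩
  rw [Measure.map_apply hm hs, Measure.prod_apply_symm (hm hs)]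
  have hslice (b : β) : μ {a | g b + a ∈ s} = μ s := measure_preimage_add μ (g b) s
  simp [Set.preimage, hslice]

lemma measurable_vertexPoint {k : ℕ} (v : Fin k → Bool) :
    Measurable fun p : A × (Fin k → A) => vertexPoint p.1 p.2 v := by
  unfold vertexPoint
  refine measurable_fst.add (Finset.measurable_sum _ fun i _ => ?_)
  split_ifs
  · exact (measurable_pi_apply i).comp measurable_snd
  · exact measurable_const

lemma measurePreserving_vertexPoint [IsProbabilityMeasure μ] {k : ℕ} {v : Fin k → Bool}
    {i : Fin k} (hi : v i = true) (x : A) :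
    MeasurePreserving (fun t => vertexPoint x t v) (Measure.pi fun _ => μ) μ := by
  obtain ⟨m, rfl⟩ : ∃ m, k = m + 1 := ⟨k - 1, by have := i.pos; omega⟩
  have he := measurePreserving_piFinSuccAbove (fun _ : Fin (m + 1) => μ) i
  have hshift := measurePreserving_comp_snd_add_fst (μ := μ) (ν := Measure.pi fun _ : Fin m => μ)
    ((measurable_vertexPoint (v ∘ i.succAbove)).comp (measurable_prodMk_left (x := x)))
  convert hshift.comp he using 1
  funext t
  have h := vertexPoint_insertNth i x (t i) (i.removeNth t) v
  rw [Fin.insertNth_self_removeNth, hi, if_pos rfl] at h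
  simp only [comp_apply, MeasurableEquiv.piFinSuccAbove_apply, Fin.insertNthEquiv_symm_apply]
  rw [h]
  simp only [vertexPoint]
  abel

lemma ae_norm_le_toReal_eLpNorm_top {α : Type*} [MeasurableSpace α] {ν : Measure α}
    [IsFiniteMeasure ν] {f : α → ℂ} (hf : Measurable f) {C : ℝ} (hC : ∀ y, ‖f y‖ ≤ C) :
    ∀ᵐ y ∂ν, ‖f y‖ ≤ (eLpNorm f ⊤ ν).toReal := by
  have hf' : MemLp f ⊤ ν := memLp_top_of_bound hf.aestronglyMeasurable C (.of_forall hC)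
  rw [toReal_eLpNorm hf'.aestronglyMeasurable]
  exact ae_le_lpNorm_exponent_top hf'

lemma sq_integral_norm_mul_norm_le {α E : Type*} [MeasurableSpace α] {ν : Measure α}
    [NormedAddCommGroup E] {u w : α → E} (hu : MemLp u 2 ν) (hw : MemLp w 2 ν) :
    (∫ y, ‖u y‖ * ‖w y‖ ∂ν) ^ 2 ≤ (∫ y, ‖u y‖ ^ 2 ∂ν) * ∫ y, ‖w y‖ ^ 2 ∂ν := by
  have h := integral_mul_norm_le_Lp_mul_Lq Real.HolderConjugate.two_two
    (by simpa using hu) (by simpa using hw)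
  simp only [Real.rpow_two] at h
  calc (∫ y, ‖u y‖ * ‖w y‖ ∂ν) ^ 2
      ≤ ((∫ y, ‖u y‖ ^ 2 ∂ν) ^ (1 / 2 : ℝ) * (∫ y, ‖w y‖ ^ 2 ∂ν) ^ (1 / 2 : ℝ)) ^ 2 :=
        pow_le_pow_left₀ (integral_nonneg fun _ => by positivity) h 2
    _ = _ := by
        rw [mul_pow, ← Real.sqrt_eq_rpow, ← Real.sqrt_eq_rpow,
          Real.sq_sqrt (integral_nonneg fun _ => by positivity),
          Real.sq_sqrt (integral_nonneg fun _ => by positivity)]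

lemma norm_integral_mul_le_of_ae_norm_le {α R : Type*} [MeasurableSpace α] {ν : Measure α}
    [NormedRing R] [NormedSpace ℝ R] {f g : α → R} {M : ℝ} (hf : ∀ᵐ y ∂ν, ‖f y‖ ≤ M)
    (hg : Integrable g ν) : ‖∫ y, f y * g y ∂ν‖ ≤ M * ∫ y, ‖g y‖ ∂ν := by
  rw [← integral_const_mul]
  refine (norm_integral_le_integral_norm _).trans (integral_mono_of_nonneg
    (.of_forall fun _ => norm_nonneg _) (hg.norm.const_mul M) ?_)
  filter_upwards [hf] with y hy
  exact (norm_mul_le _ _).trans (mul_le_mul_of_nonneg_right hy (norm_nonneg _))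

end Measure

section GowersInner

variable {A : Type*} [AddCommGroup A] {k m : ℕ} {C : ℝ}

lemma norm_prod_cstar_le {ι : Type*} (s : Finset ι) (e : ι → ℕ) {z : ι → ℂ}
    (hz : ∀ i ∈ s, ‖z i‖ ≤ C) : ‖∏ i ∈ s, cstar (e i) (z i)‖ ≤ C ^ s.card := by
  rw [norm_prod, ← Finset.prod_const]
  exact Finset.prod_le_prod (fun _ _ => norm_nonneg _) fun i hi =>
    (norm_cstar _ _).trans_le (hz i hi)

lemma norm_cubeProd_le {G : (Fin k → Bool) → A → ℂ} (hGb : ∀ v y, ‖G v y‖ ≤ C)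
    (s : Finset (Fin k → Bool)) (x : A) (t : Fin k → A) : ‖cubeProd s G x t‖ ≤ C ^ s.card :=
  norm_prod_cstar_le s _ fun v _ => hGb v _

lemma norm_sliceProd_le {G : (Fin (m + 1) → Bool) → A → ℂ} (hGb : ∀ v y, ‖G v y‖ ≤ C)
    (j : Fin (m + 1)) (s : Finset (Fin (m + 1) → Bool)) (y : A) (t : Fin m → A) :
    ‖sliceProd j s G y t‖ ≤ C ^ s.card :=
  norm_prod_cstar_le s _ fun v _ => hGb v _

variable [MeasurableSpace A]

noncomputable def gowersInner (μ : Measure A) (k : ℕ) (G : (Fin k → Bool) → A → ℂ) : ℂ :=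
  ∫ x, ∫ t, cubeProd Finset.univ G x t ∂(Measure.pi fun _ => μ) ∂μ

noncomputable def faceIntegral (μ : Measure A) (j : Fin (m + 1)) (b : Bool)
    (G : (Fin (m + 1) → Bool) → A → ℂ) (t : Fin m → A) : ℂ :=
  ∫ y, sliceProd j (Finset.univ.filter (· j = b)) G y t ∂μ

variable (μ : Measure A) [IsProbabilityMeasure μ] {G : (Fin (m + 1) → Bool) → A → ℂ}

lemma norm_faceIntegral_le (hGb : ∀ v y, ‖G v y‖ ≤ C) (j : Fin (m + 1)) (b : Bool)
    (t : Fin m → A) :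
    ‖faceIntegral μ j b G t‖
      ≤ C ^ (Finset.univ.filter fun v : Fin (m + 1) → Bool => v j = b).card := by
  simpa [faceIntegral] using norm_integral_le_of_norm_le_const (μ := μ)
    (.of_forall fun y => norm_sliceProd_le hGb j _ y t)

variable [MeasurableAdd₂ A]

lemma measurable_cubeProd {G : (Fin k → Bool) → A → ℂ} (hGm : ∀ v, Measurable (G v))
    (s : Finset (Fin k → Bool)) :
    Measurable fun p : A × (Fin k → A) => cubeProd s G p.1 p.2 :=
  Finset.measurable_prod _ fun v _ =>
    (continuous_cstar _).measurable.comp ((hGm v).comp (measurable_vertexPoint v))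

lemma measurable_sliceProd {G : (Fin (m + 1) → Bool) → A → ℂ} (hGm : ∀ v, Measurable (G v))
    (j : Fin (m + 1)) (s : Finset (Fin (m + 1) → Bool)) :
    Measurable fun p : A × (Fin m → A) => sliceProd j s G p.1 p.2 :=
  Finset.measurable_prod _ fun v _ =>
    (continuous_cstar _).measurable.comp ((hGm v).comp (measurable_vertexPoint _))

lemma stronglyMeasurable_faceIntegral (hGm : ∀ v, Measurable (G v)) (j : Fin (m + 1)) (b : Bool) :
    StronglyMeasurable (faceIntegral μ j b G) :=
  (measurable_sliceProd hGm j _).stronglyMeasurable.integral_prod_left'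

lemma memLp_faceIntegral (hGm : ∀ v, Measurable (G v)) (hGb : ∀ v y, ‖G v y‖ ≤ C)
    (j : Fin (m + 1)) (b : Bool) (p : ENNReal) :
    MemLp (faceIntegral μ j b G) p (Measure.pi fun _ => μ) :=
  .of_bound (stronglyMeasurable_faceIntegral μ hGm j b).aestronglyMeasurable _
    (.of_forall (norm_faceIntegral_le μ hGb j b))

variable [μ.IsAddLeftInvariant]

lemma integral_cubeProd_eq_integral_sliceProd_mul (hGm : ∀ v, Measurable (G v))
    (hGb : ∀ v y, ‖G v y‖ ≤ C) (j : Fin (m + 1)) (s : Finset (Fin (m + 1) → Bool)) (x : A) :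
    ∫ t, cubeProd s G x t ∂(Measure.pi fun _ => μ)
      = ∫ t, sliceProd j (s.filter (· j = false)) G x t
          * ∫ y, sliceProd j (s.filter (· j = true)) G y t ∂μ ∂(Measure.pi fun _ => μ) := by
  rw [integral_pi_insertNth μ j (φ := cubeProd s G x) (.of_bound
    ((measurable_cubeProd hGm s).comp measurable_prodMk_left).aestronglyMeasurable _
    (.of_forall (norm_cubeProd_le hGb s x)))]
  refine integral_congr_ae (.of_forall fun t => ?_)
  simp only [cubeProd_insertNth, integral_const_mul]
  congr 1
  exact integral_add_left_eq_self (fun y => sliceProd j _ G y t) x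

lemma gowersInner_eq_integral_faceIntegral_mul (hGm : ∀ v, Measurable (G v))
    (hGb : ∀ v y, ‖G v y‖ ≤ C) (j : Fin (m + 1)) :
    gowersInner μ (m + 1) G
      = ∫ t, faceIntegral μ j false G t * faceIntegral μ j true G t
          ∂(Measure.pi fun _ => μ) := by
  simp only [gowersInner, integral_cubeProd_eq_integral_sliceProd_mul μ hGm hGb j]
  rw [integral_integral_swap]
  · simp only [integral_mul_const, faceIntegral]
  · refine .of_bound (((measurable_sliceProd hGm j _).aestronglyMeasurable).mul
      ((stronglyMeasurable_faceIntegral μ hGm j true).comp_measurable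
        measurable_snd).aestronglyMeasurable)
      (C ^ (Finset.univ.filter fun v : Fin (m + 1) → Bool => v j = false).card
        * C ^ (Finset.univ.filter fun v : Fin (m + 1) → Bool => v j = true).card)
      (.of_forall fun p => ?_)
    simp only [uncurry_def, norm_mul]
    exact mul_le_mul (norm_sliceProd_le hGb j _ p.1 p.2) (norm_faceIntegral_le μ hGb j true p.2)
      (norm_nonneg _) ((norm_nonneg _).trans (norm_sliceProd_le hGb j _ p.1 p.2))

end GowersInner

section Combinatorics

variable {M : Type*} [CommMonoid M] {k : ℕ} (j : Fin k)

lemma prod_filter_update (b b' : Bool) (g : (Fin k → Bool) → M) :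
    ∏ v ∈ Finset.univ.filter (· j = b'), g (update v j b)
      = ∏ v ∈ Finset.univ.filter (· j = b), g v := by
  refine Finset.prod_nbij' (update · j b) (update · j b') (by simp) (by simp) ?_ ?_ (by simp)
  · intro v hv
    simp [← (Finset.mem_filter.mp hv).2]
  · intro v hv
    simp [← (Finset.mem_filter.mp hv).2]

lemma prod_update_eq_sq (b : Bool) (g : (Fin k → Bool) → M) :
    ∏ σ, g (update σ j b) = (∏ v ∈ Finset.univ.filter (· j = b), g v) ^ 2 := by
  rw [← Finset.prod_fiberwise Finset.univ (· j)]
  simp [prod_filter_update]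

lemma prod_update_false_mul_prod_update_true (g : (Fin k → Bool) → M) :
    (∏ σ, g (update σ j false)) * ∏ σ, g (update σ j true) = (∏ σ, g σ) ^ 2 := by
  rw [prod_update_eq_sq, prod_update_eq_sq, ← mul_pow, ← Finset.prod_fiberwise Finset.univ (· j),
    Fintype.prod_bool, mul_comm]

end Combinatorics

section Faces

variable {A : Type*} [AddCommGroup A] [MeasurableSpace A] {m : ℕ} {C : ℝ}
  (μ : Measure A) {G : (Fin (m + 1) → Bool) → A → ℂ} (j : Fin (m + 1))

lemma faceIntegral_update_self (b : Bool) :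
    faceIntegral μ j b (fun v => G (update v j b)) = faceIntegral μ j b G := by
  funext t
  refine integral_congr_ae (.of_forall fun y => Finset.prod_congr rfl fun v hv => ?_)
  obtain ⟨-, rfl⟩ := Finset.mem_filter.mp hv
  simp

lemma faceIntegral_update_of_ne {b b' : Bool} (hb : b ≠ b') (t : Fin m → A) :
    faceIntegral μ j b' (fun v => G (update v j b)) t
      = starRingEnd ℂ (faceIntegral μ j b G t) := by
  rw [faceIntegral, faceIntegral, ← integral_conj]
  refine integral_congr_ae (.of_forall fun y => ?_)
  simp only [sliceProd, map_prod]
  rw [← prod_filter_update j b b' fun v =>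
    starRingEnd ℂ (cstar (ht v) (G v (vertexPoint y t (v ∘ j.succAbove))))]
  refine Finset.prod_congr rfl fun v hv => ?_
  have hsucc : update v j b ∘ j.succAbove = v ∘ j.succAbove := by
    funext i; simp [Fin.succAbove_ne]
  rw [cstar_ht_update_of_ne ((Finset.mem_filter.mp hv).2 ▸ hb), Complex.conj_conj, hsucc]

variable [MeasurableAdd₂ A] [IsProbabilityMeasure μ] [μ.IsAddLeftInvariant]

lemma gowersInner_update_eq_integral_sq (hGm : ∀ v, Measurable (G v))
    (hGb : ∀ v y, ‖G v y‖ ≤ C) (b : Bool) :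
    gowersInner μ (m + 1) (fun v => G (update v j b))
      = ((∫ t, ‖faceIntegral μ j b G t‖ ^ 2 ∂(Measure.pi fun _ => μ) : ℝ) : ℂ) := by
  rw [gowersInner_eq_integral_faceIntegral_mul μ (fun v => hGm _) (fun v => hGb _) j,
    ← integral_complex_ofReal]
  refine integral_congr_ae (.of_forall fun t => ?_)
  dsimp only
  cases b
  · rw [faceIntegral_update_self, faceIntegral_update_of_ne μ j (by decide),
      Complex.mul_conj']
    norm_cast
  · rw [faceIntegral_update_self, faceIntegral_update_of_ne μ j (by decide), mul_comm,
      Complex.mul_conj']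
    norm_cast

theorem norm_gowersInner_sq_le (hGm : ∀ v, Measurable (G v)) (hGb : ∀ v y, ‖G v y‖ ≤ C) :
    ‖gowersInner μ (m + 1) G‖ ^ 2
      ≤ ‖gowersInner μ (m + 1) (fun v => G (update v j false))‖
        * ‖gowersInner μ (m + 1) (fun v => G (update v j true))‖ := by
  rw [gowersInner_update_eq_integral_sq μ j hGm hGb, gowersInner_update_eq_integral_sq μ j hGm hGb,
    Complex.norm_real, Complex.norm_real,
    Real.norm_of_nonneg (integral_nonneg fun _ => by positivity),
    Real.norm_of_nonneg (integral_nonneg fun _ => by positivity),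
    gowersInner_eq_integral_faceIntegral_mul μ hGm hGb j]
  refine le_trans (pow_le_pow_left₀ (norm_nonneg _) ?_ 2)
    (sq_integral_norm_mul_norm_le (memLp_faceIntegral μ hGm hGb j false 2)
      (memLp_faceIntegral μ hGm hGb j true 2))
  exact (norm_integral_le_integral_norm _).trans_eq (by simp only [norm_mul])

end Faces

section GowersCauchySchwarz

variable {A : Type*} [AddCommGroup A] [MeasurableSpace A] [MeasurableAdd₂ A]
  (μ : Measure A) [IsProbabilityMeasure μ] [μ.IsAddLeftInvariant] {m : ℕ} {C : ℝ}

lemma gowersNorm_eq_norm_rpow {f : A → ℂ} (hfm : Measurable f) (hfb : ∀ y, ‖f y‖ ≤ C) :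
    gowersNorm μ (m + 1) f = ‖gowersIntegral μ (m + 1) f‖ ^ ((1 : ℝ) / 2 ^ (m + 1)) := by
  -- updating a vertex does not change a constant system
  have h : gowersIntegral μ (m + 1) f = _ :=
    gowersInner_update_eq_integral_sq μ 0 (G := fun _ => f) (fun _ => hfm) (fun _ => hfb) true
  rw [gowersNorm, h, Complex.ofReal_re, Complex.norm_real,
    Real.norm_of_nonneg (integral_nonneg fun _ => by positivity)]

lemma gowersNorm_nonneg {f : A → ℂ} (hfm : Measurable f) (hfb : ∀ y, ‖f y‖ ≤ C) :
    0 ≤ gowersNorm μ (m + 1) f := by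
  rw [gowersNorm_eq_norm_rpow μ hfm hfb]
  positivity

lemma gowersNorm_pow {f : A → ℂ} (hfm : Measurable f) (hfb : ∀ y, ‖f y‖ ≤ C) :
    gowersNorm μ (m + 1) f ^ 2 ^ (m + 1) = ‖gowersIntegral μ (m + 1) f‖ := by
  have hcast : (2 : ℝ) ^ (m + 1) = ((2 ^ (m + 1) : ℕ) : ℝ) := by push_cast; rfl
  rw [gowersNorm_eq_norm_rpow μ hfm hfb, one_div, hcast,
    Real.rpow_inv_natCast_pow (norm_nonneg _) (by positivity)]

/-- Induction on the set `S` of coordinates on which `G` may depend: Cauchy–Schwarz in a direction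
`j` replaces `G` by the two systems `v ↦ G (update v j b)`, which no longer depend on `vⱼ`. -/
lemma pow_norm_gowersInner_le_of_dependsOn (S : Finset (Fin (m + 1)))
    (G : (Fin (m + 1) → Bool) → A → ℂ) (hGm : ∀ v, Measurable (G v))
    (hGb : ∀ v y, ‖G v y‖ ≤ C) (hGS : ∀ v w, (∀ i ∈ S, v i = w i) → G v = G w) :
    ‖gowersInner μ (m + 1) G‖ ^ 2 ^ (m + 1) ≤ ∏ σ, ‖gowersIntegral μ (m + 1) (G σ)‖ := by
  induction S using Finset.induction_on generalizing G with
  | empty =>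
    have hconst (v : Fin (m + 1) → Bool) : G v = G 0 := hGS v 0 (by simp)
    rw [Finset.prod_congr rfl fun σ _ => by rw [hconst σ], Finset.prod_const, Finset.card_univ,
      Fintype.card_fun, Fintype.card_bool, Fintype.card_fin, funext hconst]
    rfl
  | insert j S _ ih =>
    have hupdate (b : Bool) :
        ‖gowersInner μ (m + 1) (fun v => G (update v j b))‖ ^ 2 ^ (m + 1)
          ≤ ∏ σ, ‖gowersIntegral μ (m + 1) (G (update σ j b))‖ := by
      refine ih _ (fun v => hGm _) (fun v => hGb _) fun v w hvw => hGS _ _ fun i hi => ?_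
      by_cases hij : i = j
      · simp [hij]
      · simp [update_of_ne hij, hvw i ((Finset.mem_insert.mp hi).resolve_left hij)]
    refine le_of_pow_le_pow_left₀ two_ne_zero (by positivity) ?_
    calc (‖gowersInner μ (m + 1) G‖ ^ 2 ^ (m + 1)) ^ 2
        = (‖gowersInner μ (m + 1) G‖ ^ 2) ^ 2 ^ (m + 1) := by ring
      _ ≤ (‖gowersInner μ (m + 1) (fun v => G (update v j false))‖
            * ‖gowersInner μ (m + 1) (fun v => G (update v j true))‖) ^ 2 ^ (m + 1) :=
          pow_le_pow_left₀ (by positivity) (norm_gowersInner_sq_le μ j hGm hGb) _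
      _ ≤ (∏ σ, ‖gowersIntegral μ (m + 1) (G (update σ j false))‖)
            * ∏ σ, ‖gowersIntegral μ (m + 1) (G (update σ j true))‖ := by
          rw [mul_pow]
          exact mul_le_mul (hupdate false) (hupdate true) (by positivity) (by positivity)
      _ = (∏ σ, ‖gowersIntegral μ (m + 1) (G σ)‖) ^ 2 :=
          prod_update_false_mul_prod_update_true j fun σ => ‖gowersIntegral μ (m + 1) (G σ)‖

theorem norm_gowersInner_le_prod_gowersNorm {G : (Fin (m + 1) → Bool) → A → ℂ}
    (hGm : ∀ v, Measurable (G v)) (hGb : ∀ v y, ‖G v y‖ ≤ C) :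
    ‖gowersInner μ (m + 1) G‖ ≤ ∏ σ, gowersNorm μ (m + 1) (G σ) := by
  refine le_of_pow_le_pow_left₀ (pow_ne_zero (m + 1) two_ne_zero)
    (Finset.prod_nonneg fun σ _ => gowersNorm_nonneg μ (hGm σ) (hGb σ)) ?_
  rw [← Finset.prod_pow]
  simp only [gowersNorm_pow μ (hGm _) (hGb _)]
  exact pow_norm_gowersInner_le_of_dependsOn μ Finset.univ G hGm hGb fun v w h =>
    congrArg G (funext fun i => h i (Finset.mem_univ i))

end GowersCauchySchwarz

section CornerConvolution

variable {A : Type*} [AddCommGroup A] [MeasurableSpace A] [MeasurableAdd₂ A]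
  (μ : Measure A) [IsProbabilityMeasure μ] [μ.IsAddLeftInvariant] {m : ℕ} {C : ℝ}
  {F : (Fin (m + 1) → Bool) → A → ℂ}

lemma cornerConv_eq_integral_sliceProd_mul_faceIntegral (hFm : ∀ v, Measurable (F v))
    (hFb : ∀ v y, ‖F v y‖ ≤ C) (j : Fin (m + 1)) (x : A) :
    cornerConv μ (m + 1) F x
      = ∫ t, sliceProd j (Finset.univ.filter fun v => (v ≠ fun _ => false) ∧ v j = false) F x t
          * faceIntegral μ j true F t ∂(Measure.pi fun _ => μ) := by
  rw [show cornerConv μ (m + 1) F x = ∫ t, cubeProd (Finset.univ.filter fun v => v ≠ fun _ => false)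
      F x t ∂(Measure.pi fun _ => μ) from rfl,
    integral_cubeProd_eq_integral_sliceProd_mul μ hFm hFb j,
    Finset.filter_filter, Finset.filter_filter]
  have hK : (Finset.univ.filter fun v : Fin (m + 1) → Bool => (v ≠ fun _ => false) ∧ v j = true)
      = Finset.univ.filter (· j = true) :=
    Finset.filter_congr fun v _ => and_iff_right_of_imp fun hv h0 => by simp [h0] at hv
  rw [hK]
  rfl

lemma ae_norm_sliceProd_le_prod_eLpNorm (hFm : ∀ v, Measurable (F v))
    (hFb : ∀ v y, ‖F v y‖ ≤ C) (j : Fin (m + 1)) (x : A) :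
    ∀ᵐ t ∂(Measure.pi fun _ => μ),
      ‖sliceProd j (Finset.univ.filter fun v => (v ≠ fun _ => false) ∧ v j = false) F x t‖
        ≤ ∏ v ∈ Finset.univ.filter
            (fun v : Fin (m + 1) → Bool => (v ≠ fun _ => false) ∧ v j = false),
            (eLpNorm (F v) ⊤ μ).toReal := by
  have hfactor : ∀ v ∈ Finset.univ.filter
      (fun v : Fin (m + 1) → Bool => (v ≠ fun _ => false) ∧ v j = false),
      ∀ᵐ t ∂(Measure.pi fun _ => μ),
        ‖F v (vertexPoint x t (v ∘ j.succAbove))‖ ≤ (eLpNorm (F v) ⊤ μ).toReal := by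
    intro v hv
    obtain ⟨hv0, hvj⟩ := (Finset.mem_filter.mp hv).2
    obtain ⟨i, hi⟩ : ∃ i, v i = true := by simpa [funext_iff] using hv0
    obtain ⟨i', rfl⟩ := Fin.exists_succAbove_eq (x := i) (y := j) (by rintro rfl; simp_all)
    exact (measurePreserving_vertexPoint (v := v ∘ j.succAbove) hi x).quasiMeasurePreserving.ae
      (ae_norm_le_toReal_eLpNorm_top (hFm v) (hFb v))
  filter_upwards [(Filter.eventually_all_finset _).mpr hfactor] with t ht
  rw [sliceProd, norm_prod]
  exact Finset.prod_le_prod (fun _ _ => norm_nonneg _) fun v hv =>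
    (norm_cstar _ _).trans_le (ht v hv)

lemma integral_norm_faceIntegral_le_prod_gowersNorm (hFm : ∀ v, Measurable (F v))
    (hFb : ∀ v y, ‖F v y‖ ≤ C) (j : Fin (m + 1)) :
    ∫ t, ‖faceIntegral μ j true F t‖ ∂(Measure.pi fun _ => μ)
      ≤ ∏ v ∈ Finset.univ.filter (· j = true), gowersNorm μ (m + 1) (F v) := by
  refine le_of_pow_le_pow_left₀ two_ne_zero
    (Finset.prod_nonneg fun v _ => gowersNorm_nonneg μ (hFm v) (hFb v)) ?_
  calc (∫ t, ‖faceIntegral μ j true F t‖ ∂(Measure.pi fun _ => μ)) ^ 2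
      ≤ ∫ t, ‖faceIntegral μ j true F t‖ ^ 2 ∂(Measure.pi fun _ => μ) := by
        simpa using sq_integral_norm_mul_norm_le (memLp_faceIntegral μ hFm hFb j true 2)
          (memLp_const (1 : ℂ))
    _ = ‖gowersInner μ (m + 1) fun v => F (update v j true)‖ := by
        rw [gowersInner_update_eq_integral_sq μ j hFm hFb, Complex.norm_real,
          Real.norm_of_nonneg (integral_nonneg fun _ => by positivity)]
    _ ≤ ∏ σ, gowersNorm μ (m + 1) (F (update σ j true)) :=
        norm_gowersInner_le_prod_gowersNorm μ (fun v => hFm _) fun v => hFb _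
    _ = _ := prod_update_eq_sq j true fun v => gowersNorm μ (m + 1) (F v)

end CornerConvolution

theorem abs_cornerConv_le_general
    {A : Type*} [AddCommGroup A] [TopologicalSpace A] [IsTopologicalAddGroup A]
    [SecondCountableTopology A]
    [MeasurableSpace A] [BorelSpace A]
    (μ : Measure A) [μ.IsAddHaarMeasure] [IsProbabilityMeasure μ]
    (n : ℕ)
    (F : (Fin n → Bool) → A → ℂ)
    (hmeas : ∀ v, Measurable (F v)) (hbd : ∀ v, ∃ C : ℝ, ∀ x, ‖F v x‖ ≤ C)
    (j : Fin n) (x : A) :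
    ‖cornerConv μ n F x‖ ≤
      (∏ v ∈ Finset.univ.filter
          (fun v : Fin n → Bool => (v ≠ fun _ => false) ∧ v j = false),
        (eLpNorm (F v) ⊤ μ).toReal) *
      ∏ v ∈ Finset.univ.filter (fun v : Fin n → Bool => v j = true),
        gowersNorm μ n (F v) := by
  obtain ⟨m, rfl⟩ : ∃ m, n = m + 1 := ⟨n - 1, by have := j.pos; omega⟩
  obtain ⟨C, hC⟩ : ∃ C : ℝ, ∀ v y, ‖F v y‖ ≤ C := by
    choose c hc using hbd
    obtain ⟨C, hcC⟩ := Finite.exists_le c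
    exact ⟨C, fun v y => (hc v y).trans (hcC v)⟩
  rw [cornerConv_eq_integral_sliceProd_mul_faceIntegral μ hmeas hC j x]
  exact (norm_integral_mul_le_of_ae_norm_le (ae_norm_sliceProd_le_prod_eLpNorm μ hmeas hC j x)
    ((memLp_faceIntegral μ hmeas hC j true 1).integrable le_rfl)).trans
    (mul_le_mul_of_nonneg_left (integral_norm_faceIntegral_le_prod_gowersNorm μ hmeas hC j)
      (Finset.prod_nonneg fun _ _ => ENNReal.toReal_nonneg))

/-- for every `j` and every `x`, the corner convolution satisfies
`|[F](x)| ≤ ∏_{v ∈ K_n, v_j = 0} ‖f_v‖_∞ · ∏_{v ∈ K_n, v_j = 1} ‖f_v‖_{U_n}`. -/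
theorem abs_cornerConv_le
    {A : Type*} [AddCommGroup A] [TopologicalSpace A] [IsTopologicalAddGroup A]
    [CompactSpace A] [T2Space A] [SecondCountableTopology A]
    [MeasurableSpace A] [BorelSpace A]
    (μ : Measure A) [μ.IsAddHaarMeasure] [IsProbabilityMeasure μ]
    (n : ℕ) (hn : 1 ≤ n)
    (F : (Fin n → Bool) → A → ℂ)
    (hmeas : ∀ v, Measurable (F v)) (hbd : ∀ v, ∃ C : ℝ, ∀ x, ‖F v x‖ ≤ C)
    (j : Fin n) (x : A) :
    ‖cornerConv μ n F x‖ ≤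
      (∏ v ∈ Finset.univ.filter
          (fun v : Fin n → Bool => (v ≠ fun _ => false) ∧ v j = false),
        (eLpNorm (F v) ⊤ μ).toReal) *
      ∏ v ∈ Finset.univ.filter (fun v : Fin n → Bool => v j = true),
        gowersNorm μ n (F v) :=
  abs_cornerConv_le_general μ n F hmeas hbd j x
end

section
/- Let A be a compact Hausdorff second-countable abelian group with normalized Haar probability measure μ, let B ≤ A be a closed subgroup with normalized Haar probability measure ν, let ε > 0, and let f : A → ℂ be a Borel measurable function with ‖f‖_∞ ≤ 1. Define f_B(z) = ∫_B f(z+y) dν(y). Then there exist a natural number n ≤ 1 + 4/ε² and elements a₁,…,a_n ∈ B such that the function g(z) = (1/n)·∑_{i=1}^n f(z + a_i) satisfies ‖f_B − g‖_{L²(μ)} ≤ ε. -/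
open MeasureTheory
open scoped ENNReal

open Function RealInnerProductSpace

/-! Maurey's empirical method. Put `h_b = f(· + b) - f_B`; for every `z` the values `h_b z` have
`ν`-mean zero, so for any `S ∈ L²(μ)` the `ν`-average of `‖S + h_b‖₂²` is `‖S‖₂² + 𝔼_b ‖h_b‖₂²`
(Tonelli, and the cross term integrates to zero), which is at most `‖S‖₂² + 4`. Some `b` is no
worse than the average, so choosing `a₁, …, a_n` greedily gives `‖∑ᵢ h_{aᵢ}‖₂² ≤ 4n`, i.e.
`‖f_B - g‖₂ ≤ 2/√n ≤ ε` once `n = ⌈4/ε²⌉`. -/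

theorem sq_eLpNorm_two {X F : Type*} [MeasurableSpace X] [NormedAddCommGroup F] {μ : Measure X}
    (G : X → F) : eLpNorm G 2 μ ^ 2 = ∫⁻ z, ‖G z‖ₑ ^ 2 ∂μ := by
  simpa using eLpNorm_nnreal_pow_eq_lintegral (f := G) (μ := μ) (p := 2) two_ne_zero

theorem MeasureTheory.MemLp.lintegral_enorm_sq_eq_ofReal {Ω F : Type*} [MeasurableSpace Ω]
    [NormedAddCommGroup F] {ν : Measure Ω} {Y : Ω → F} (hY : MemLp Y 2 ν) :
    ∫⁻ ω, ‖Y ω‖ₑ ^ 2 ∂ν = ENNReal.ofReal (∫ ω, ‖Y ω‖ ^ 2 ∂ν) := by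
  rw [ofReal_integral_eq_lintegral_ofReal hY.norm.integrable_sq
    (ae_of_all _ fun _ => by positivity)]
  simp_rw [ENNReal.ofReal_pow (norm_nonneg _), ofReal_norm]

section

variable {B X E : Type*} [MeasurableSpace B] [MeasurableSpace X]
  [NormedAddCommGroup E] [InnerProductSpace ℝ E] [CompleteSpace E]
  {ν : Measure B} [IsProbabilityMeasure ν]

theorem integral_norm_add_sq_of_integral_eq_zero {Y : B → E} (hY : MemLp Y 2 ν)
    (hY₀ : ∫ b, Y b ∂ν = 0) (s : E) :
    ∫ b, ‖s + Y b‖ ^ 2 ∂ν = ‖s‖ ^ 2 + ∫ b, ‖Y b‖ ^ 2 ∂ν := by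
  have hY₁ := hY.integrable one_le_two
  have hcross : Integrable (fun b => 2 * ⟪s, Y b⟫) ν := (hY₁.const_inner s).const_mul 2
  have hconst_cross : Integrable (fun b => ‖s‖ ^ 2 + 2 * ⟪s, Y b⟫) ν :=
    (integrable_const _).add hcross
  simp_rw [norm_add_sq_real]
  rw [integral_add hconst_cross hY.norm.integrable_sq, integral_add (integrable_const _) hcross,
    integral_const_mul, integral_inner hY₁, hY₀, inner_zero_right]
  simp

theorem lintegral_enorm_add_sq_of_integral_eq_zero {Y : B → E} (hY : MemLp Y 2 ν)
    (hY₀ : ∫ b, Y b ∂ν = 0) (s : E) :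
    ∫⁻ b, ‖s + Y b‖ₑ ^ 2 ∂ν = ‖s‖ₑ ^ 2 + ∫⁻ b, ‖Y b‖ₑ ^ 2 ∂ν := by
  have hsY : MemLp (fun b => s + Y b) 2 ν := (memLp_const s).add hY
  rw [hsY.lintegral_enorm_sq_eq_ofReal, hY.lintegral_enorm_sq_eq_ofReal,
    integral_norm_add_sq_of_integral_eq_zero hY hY₀, ENNReal.ofReal_add (by positivity)
    (by positivity), ENNReal.ofReal_pow (norm_nonneg _), ofReal_norm]

variable {μ : Measure X} [SFinite μ] {h : B → X → E}

theorem exists_lintegral_enorm_add_sq_le (hh : StronglyMeasurable (uncurry h))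
    (hmem : ∀ z, MemLp (h · z) 2 ν) (hmean : ∀ z, ∫ b, h b z ∂ν = 0)
    {S : X → E} (hS : StronglyMeasurable S) :
    ∃ b, ∫⁻ z, ‖S z + h b z‖ₑ ^ 2 ∂μ ≤
      ∫⁻ z, ‖S z‖ₑ ^ 2 ∂μ + ∫⁻ z, ∫⁻ b, ‖h b z‖ₑ ^ 2 ∂ν ∂μ := by
  have hmeas : Measurable (uncurry fun b z => ‖S z + h b z‖ₑ ^ 2) :=
    ((hS.comp_measurable measurable_snd).add hh).enorm.pow_const 2
  obtain ⟨b, hb⟩ := exists_le_lintegral (μ := ν) (hmeas.lintegral_prod_right' (ν := μ)).aemeasurable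
  simp only [uncurry_apply_pair] at hb
  refine ⟨b, hb.trans_eq ?_⟩
  rw [lintegral_lintegral_swap hmeas.aemeasurable, ← lintegral_add_left (hS.enorm.pow_const 2)]
  exact lintegral_congr fun z => lintegral_enorm_add_sq_of_integral_eq_zero (hmem z) (hmean z) _

theorem exists_lintegral_enorm_sum_sq_le (hh : StronglyMeasurable (uncurry h))
    (hmem : ∀ z, MemLp (h · z) 2 ν) (hmean : ∀ z, ∫ b, h b z ∂ν = 0) (n : ℕ) :
    ∃ a : Fin n → B, ∫⁻ z, ‖∑ i, h (a i) z‖ₑ ^ 2 ∂μ ≤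
      n * ∫⁻ z, ∫⁻ b, ‖h b z‖ₑ ^ 2 ∂ν ∂μ := by
  induction n with
  | zero => exact ⟨Fin.elim0, by simp⟩
  | succ n ih =>
    obtain ⟨a, ha⟩ := ih
    have hS : StronglyMeasurable fun z => ∑ i, h (a i) z :=
      Finset.stronglyMeasurable_fun_sum _ fun i _ => hh.comp_measurable measurable_prodMk_left
    obtain ⟨b, hb⟩ := exists_lintegral_enorm_add_sq_le (μ := μ) hh hmem hmean hS
    refine ⟨Fin.snoc a b, ?_⟩
    simp only [Fin.sum_univ_castSucc, Fin.snoc_castSucc, Fin.snoc_last]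
    calc _ ≤ _ := hb
      _ ≤ n * ∫⁻ z, ∫⁻ b, ‖h b z‖ₑ ^ 2 ∂ν ∂μ + ∫⁻ z, ∫⁻ b, ‖h b z‖ₑ ^ 2 ∂ν ∂μ := by gcongr
      _ = (n + 1 : ℕ) * ∫⁻ z, ∫⁻ b, ‖h b z‖ₑ ^ 2 ∂ν ∂μ := by push_cast; ring

theorem exists_sq_eLpNorm_average_le (hh : StronglyMeasurable (uncurry h))
    (hmem : ∀ z, MemLp (h · z) 2 ν) (hmean : ∀ z, ∫ b, h b z ∂ν = 0) {n : ℕ} (hn : n ≠ 0) :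
    ∃ a : Fin n → B, eLpNorm (fun z => (n : ℝ)⁻¹ • ∑ i, h (a i) z) 2 μ ^ 2 ≤
      (∫⁻ z, ∫⁻ b, ‖h b z‖ₑ ^ 2 ∂ν ∂μ) / n := by
  obtain ⟨a, ha⟩ := exists_lintegral_enorm_sum_sq_le (μ := μ) hh hmem hmean n
  refine ⟨a, ?_⟩
  rw [sq_eLpNorm_two]
  simp_rw [enorm_smul, mul_pow]
  rw [lintegral_const_mul' _ _ (by simp)]
  calc _ ≤ ‖(n : ℝ)⁻¹‖ₑ ^ 2 * (n * ∫⁻ z, ∫⁻ b, ‖h b z‖ₑ ^ 2 ∂ν ∂μ) := by gcongr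
    _ = _ := by
      rw [enorm_inv (by exact_mod_cast hn), Real.enorm_natCast, sq, mul_assoc,
        ← mul_assoc _ (n : ℝ≥0∞), ENNReal.inv_mul_cancel (by exact_mod_cast hn) (by simp),
        one_mul, div_eq_mul_inv, mul_comm]

theorem exists_eLpNorm_average_le_of_norm_le [IsProbabilityMeasure μ]
    (hh : StronglyMeasurable (uncurry h)) {C : ℝ} (hC : 0 ≤ C) (hbound : ∀ b z, ‖h b z‖ ≤ C)
    (hmean : ∀ z, ∫ b, h b z ∂ν = 0) {n : ℕ} (hn : n ≠ 0) :
    ∃ a : Fin n → B, eLpNorm (fun z => (n : ℝ)⁻¹ • ∑ i, h (a i) z) 2 μ ≤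
      ENNReal.ofReal (C / √n) := by
  have hmem (z : X) : MemLp (h · z) 2 ν :=
    .of_bound (hh.comp_measurable measurable_prodMk_right).aestronglyMeasurable C
      (ae_of_all _ fun b => hbound b z)
  have henorm (b : B) (z : X) : ‖h b z‖ₑ ≤ ENNReal.ofReal C := by
    rw [← ofReal_norm]
    exact ENNReal.ofReal_le_ofReal (hbound b z)
  obtain ⟨a, ha⟩ := exists_sq_eLpNorm_average_le (μ := μ) hh hmem hmean hn
  refine ⟨a, (ENNReal.pow_le_pow_left_iff two_ne_zero).1 (ha.trans ?_)⟩
  calc (∫⁻ z, ∫⁻ b, ‖h b z‖ₑ ^ 2 ∂ν ∂μ) / n ≤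
        (∫⁻ (_ : X), ∫⁻ (_ : B), ENNReal.ofReal C ^ 2 ∂ν ∂μ) / n := by
        gcongr with z b
        exact henorm b z
    _ = ENNReal.ofReal (C / √n) ^ 2 := by
        have hn' : (0 : ℝ) < n := by positivity
        simp only [lintegral_const, measure_univ, mul_one]
        rw [← ENNReal.ofReal_pow (by positivity : 0 ≤ C / √n), div_pow, Real.sq_sqrt hn'.le,
          ENNReal.ofReal_div_of_pos hn', ENNReal.ofReal_natCast, ENNReal.ofReal_pow hC]

theorem exists_eLpNorm_integral_sub_average_le [IsProbabilityMeasure μ] {F : B → X → E}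
    (hF : StronglyMeasurable (uncurry F)) {C : ℝ} (hC : 0 ≤ C) (hbound : ∀ b z, ‖F b z‖ ≤ C)
    {n : ℕ} (hn : n ≠ 0) :
    ∃ a : Fin n → B, eLpNorm (fun z => ∫ b, F b z ∂ν - (n : ℝ)⁻¹ • ∑ i, F (a i) z) 2 μ ≤
      ENNReal.ofReal (2 * C / √n) := by
  set h : B → X → E := fun b z => F b z - ∫ b', F b' z ∂ν with h_def
  have hh : StronglyMeasurable (uncurry h) :=
    hF.sub ((hF.comp_measurable measurable_swap).integral_prod_right'.comp_measurable
      measurable_snd)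
  have hbound' (b : B) (z : X) : ‖h b z‖ ≤ 2 * C := by
    have hint_le : ‖∫ b', F b' z ∂ν‖ ≤ C := by
      simpa using norm_integral_le_of_norm_le_const (μ := ν) (ae_of_all _ fun b' => hbound b' z)
    linarith [norm_sub_le (F b z) (∫ b', F b' z ∂ν), hbound b z]
  have hmean (z : X) : ∫ b, h b z ∂ν = 0 := by
    have hint : Integrable (F · z) ν :=
      .of_bound (hF.comp_measurable measurable_prodMk_right).aestronglyMeasurable C
        (ae_of_all _ fun b => hbound b z)
    rw [integral_sub hint (integrable_const _)]
    simp
  obtain ⟨a, ha⟩ := exists_eLpNorm_average_le_of_norm_le (μ := μ) hh (by positivity) hbound'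
    hmean hn
  refine ⟨a, (le_of_eq ?_).trans ha⟩
  rw [← eLpNorm_neg]
  congr 1
  funext z
  simp only [h_def, Finset.sum_sub_distrib, Finset.sum_const, Finset.card_univ, Fintype.card_fin,
    smul_sub, Pi.neg_apply, neg_sub]
  rw [← Nat.cast_smul_eq_nsmul ℝ, inv_smul_smul₀ (by exact_mod_cast hn)]

end

theorem exists_nat_le_one_add_four_div_sq {ε : ℝ} (hε : 0 < ε) :
    ∃ n : ℕ, 0 < n ∧ (n : ℝ) ≤ 1 + 4 / ε ^ 2 ∧ 2 / √n ≤ ε := by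
  refine ⟨⌈4 / ε ^ 2⌉₊, Nat.ceil_pos.2 (by positivity),
    (Nat.ceil_lt_add_one (by positivity)).le.trans_eq (add_comm _ _), ?_⟩
  have hn : 4 / ε ^ 2 ≤ ⌈4 / ε ^ 2⌉₊ := Nat.le_ceil _
  have hn_pos : (0 : ℝ) < ⌈4 / ε ^ 2⌉₊ := (by positivity : (0 : ℝ) < 4 / ε ^ 2).trans_le hn
  calc 2 / √(⌈4 / ε ^ 2⌉₊ : ℝ) = √(4 / ⌈4 / ε ^ 2⌉₊) := by
        rw [Real.sqrt_div' _ hn_pos.le, show (4 : ℝ) = 2 ^ 2 by norm_num, Real.sqrt_sq zero_le_two]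
    _ ≤ √(ε ^ 2) := Real.sqrt_le_sqrt ((div_le_comm₀ (by positivity) hn_pos).1 hn)
    _ = ε := Real.sqrt_sq hε.le

theorem subgroup_average_approx_general
    {A : Type*} [AddCommGroup A] [TopologicalSpace A] [IsTopologicalAddGroup A]
    [SecondCountableTopology A]
    [MeasurableSpace A] [BorelSpace A]
    (μ : Measure A) [IsProbabilityMeasure μ]
    (B : AddSubgroup A)
    (ν : Measure B) [IsProbabilityMeasure ν]
    (ε : ℝ) (hε : 0 < ε)
    (f : A → ℂ) (hf : Measurable f) (hbd : ∀ x, ‖f x‖ ≤ 1) :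
    ∃ n : ℕ, 0 < n ∧ (n : ℝ) ≤ 1 + 4 / ε ^ 2 ∧
      ∃ a : Fin n → B,
        eLpNorm (fun z => (∫ y : B, f (z + (y : A)) ∂ν) -
            (1 / n : ℂ) * ∑ i, f (z + (a i : A))) 2 μ
          ≤ ENNReal.ofReal ε := by
  have hf_add : StronglyMeasurable (uncurry fun (b : B) z => f (z + b)) :=
    (hf.comp (measurable_snd.add (measurable_subtype_coe.comp measurable_fst))).stronglyMeasurable
  obtain ⟨n, hn_pos, hn_le, hnε⟩ := exists_nat_le_one_add_four_div_sq hε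
  obtain ⟨a, ha⟩ := exists_eLpNorm_integral_sub_average_le (μ := μ) (ν := ν) hf_add zero_le_one
    (fun _ _ => hbd _) hn_pos.ne'
  refine ⟨n, hn_pos, hn_le, a, ?_⟩
  simp only [one_div, ← Complex.ofReal_natCast, ← Complex.ofReal_inv, ← Complex.real_smul]
  exact ha.trans (ENNReal.ofReal_le_ofReal (by rwa [mul_one]))

/-- averaging over a closed subgroup `B` of a compact abelian group `A` can be
approximated in `L²` by an average of at most `1 + 4/ε²` translates: for `f : A → ℂ` with
`‖f‖_∞ ≤ 1` and `f_B(z) = ∫_B f(z+y) dν(y)` there are `a₁,…,a_n ∈ B`, `n ≤ 1 + 4/ε²`, with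
`‖f_B − (1/n)∑ f(·+aᵢ)‖_{L²(μ)} ≤ ε`. -/
theorem subgroup_average_approx
    {A : Type*} [AddCommGroup A] [TopologicalSpace A] [IsTopologicalAddGroup A]
    [CompactSpace A] [T2Space A] [SecondCountableTopology A]
    [MeasurableSpace A] [BorelSpace A]
    (μ : Measure A) [μ.IsAddHaarMeasure] [IsProbabilityMeasure μ]
    (B : AddSubgroup A) (hB : IsClosed (B : Set A))
    (ν : Measure B) [ν.IsAddHaarMeasure] [IsProbabilityMeasure ν]
    (ε : ℝ) (hε : 0 < ε)
    (f : A → ℂ) (hf : Measurable f) (hbd : ∀ x, ‖f x‖ ≤ 1) :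
    ∃ n : ℕ, 0 < n ∧ (n : ℝ) ≤ 1 + 4 / ε ^ 2 ∧
      ∃ a : Fin n → B,
        eLpNorm (fun z => (∫ y : B, f (z + (y : A)) ∂ν) -
            (1 / n : ℂ) * ∑ i, f (z + (a i : A))) 2 μ
          ≤ ENNReal.ofReal ε :=
  subgroup_average_approx_general μ B ν ε hε f hf hbd
end

section
/- Let A be an abelian group and let n ≥ 1, k ≥ 0 be integers. A map f : ℤⁿ → A is a polynomial of degree at most k if and only if f lies in the additive subgroup of maps ℤⁿ → A generated by the maps x = (x₁,…,x_n) ↦ (∏_{i=1}^n binom(x_i, m_i)) • a, where a ∈ A and m₁,…,m_n are nonnegative integers with m₁ + ⋯ + m_n ≤ k, and binom(x, m) denotes the integer-valued binomial coefficient x(x−1)⋯(x−m+1)/m! of an integer argument x. -/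
/-!
By Vandermonde's identity, `D_h` of the binomial monomial `x ↦ (∏ᵢ binom(xᵢ, mᵢ)) • a` is a
combination of binomial monomials with strictly smaller multi-index, so `k + 1` differences kill
the span of those with `∑ mᵢ ≤ k`.

Conversely, summing from `0` along the `i`-th coordinate inverts `D_{eᵢ}` up to the restriction
to `xᵢ = 0`, and by the hockey-stick identity it raises `mᵢ` by one. Setting the coordinates to
zero one at a time, `f` is thus a sum of such indefinite sums of `D_{eᵢ}` of polynomials of
degree `≤ k - 1` (in the span by induction on `k`) and a constant.
-/

open scoped BigOperators

/-- The difference operator `D_h`: `(D_h f)(x) = f(x+h) − f(x)`. -/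
def discDeriv {G A : Type*} [Add G] [Sub A] (h : G) (f : G → A) : G → A :=
  fun x => f (x + h) - f x

/-- `f` is a polynomial map of degree at most `k`: it is killed by any `k+1` consecutive
applications of difference operators. -/
def IsPolyDegLe {G A : Type*} [Add G] [Sub A] [Zero A] (k : ℕ) (f : G → A) : Prop :=
  ∀ hs : Fin (k + 1) → G, (List.ofFn hs).foldr discDeriv f = fun _ => (0 : A)

open Finset Function fwdDiff

section IsPolyDegLe

variable {G H A : Type*} [AddCommMonoid G] [AddCommMonoid H] [AddCommGroup A]

lemma isPolyDegLe_zero_iff {f : G → A} : IsPolyDegLe 0 f ↔ ∀ h, Δ_[h] f = 0 := by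
  simp only [IsPolyDegLe, List.ofFn_succ, List.ofFn_zero, List.foldr_cons, List.foldr_nil]
  exact ⟨fun hf h => hf fun _ => h, fun hf hs => hf (hs 0)⟩

lemma isPolyDegLe_succ_iff {k : ℕ} {f : G → A} :
    IsPolyDegLe (k + 1) f ↔ ∀ h, IsPolyDegLe k (Δ_[h] f) := by
  have foldr_snoc (hs : Fin (k + 1 + 1) → G) : (List.ofFn hs).foldr discDeriv f =
      (List.ofFn fun i => hs i.castSucc).foldr discDeriv (Δ_[hs (Fin.last _)] f) := by
    rw [List.ofFn_succ', List.concat_eq_append, List.foldr_append]; rfl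
  refine ⟨fun hf h hs => ?_, fun hf hs => ?_⟩
  · simpa only [foldr_snoc, Fin.snoc_last, Fin.snoc_castSucc] using hf (Fin.snoc hs h)
  · rw [foldr_snoc]
    exact hf _ _

lemma fwdDiff_comp_addMonoidHom (L : G →+ H) (h : G) (f : H → A) :
    Δ_[h] (f ∘ L) = Δ_[L h] f ∘ L := by
  funext x
  simp [fwdDiff]

lemma IsPolyDegLe.comp_addMonoidHom {k : ℕ} {f : H → A} (hf : IsPolyDegLe k f) (L : G →+ H) :
    IsPolyDegLe k (f ∘ L) := by
  induction k generalizing f with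
  | zero =>
    rw [isPolyDegLe_zero_iff] at hf ⊢
    intro h
    rw [fwdDiff_comp_addMonoidHom, hf]
    rfl
  | succ k ih =>
    rw [isPolyDegLe_succ_iff] at hf ⊢
    intro h
    rw [fwdDiff_comp_addMonoidHom]
    exact ih (hf _)

end IsPolyDegLe

section BinomialSpan

variable {ι A : Type*} [Fintype ι] [AddCommGroup A]

def binomialMonomial (m : ι → ℕ) (a : A) : (ι → ℤ) → A :=
  fun x => (∏ i, Ring.choose (x i) (m i)) • a

variable (ι A) in
def binomialSpan (k : ℕ) : AddSubgroup ((ι → ℤ) → A) :=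
  AddSubgroup.closure {g | ∃ (a : A) (m : ι → ℕ), ∑ i, m i ≤ k ∧ g = binomialMonomial m a}

lemma binomialMonomial_mem_binomialSpan {k : ℕ} {m : ι → ℕ} (hm : ∑ i, m i ≤ k) (a : A) :
    binomialMonomial m a ∈ binomialSpan ι A k :=
  AddSubgroup.subset_closure ⟨a, m, hm, rfl⟩

lemma binomialMonomial_zero (a : A) : binomialMonomial (0 : ι → ℕ) a = fun _ => a := by
  funext x
  simp [binomialMonomial]

lemma const_mem_binomialSpan (k : ℕ) (a : A) : (fun _ => a) ∈ binomialSpan ι A k := by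
  simpa only [binomialMonomial_zero] using
    binomialMonomial_mem_binomialSpan (m := (0 : ι → ℕ)) (by simp) a

lemma Ring.choose_add_eq_sum_Iic {R : Type*} [CommRing R] [BinomialRing R] (x h : R) (m : ℕ) :
    Ring.choose (x + h) m = ∑ p ∈ Iic m, Ring.choose x p * Ring.choose h (m - p) := by
  rw [Ring.add_choose_eq m (Commute.all x h), Nat.sum_antidiagonal_eq_sum_range_succ_mk,
    Nat.range_succ_eq_Iic]

lemma fwdDiff_eq_zero_of_mem_binomialSpan_zero (h : ι → ℤ) {f : (ι → ℤ) → A}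
    (hf : f ∈ binomialSpan ι A 0) : Δ_[h] f = 0 := by
  change f ∈ (AddMonoidHom.mk' (fwdDiff h) (fwdDiff_add h)).ker
  refine (AddSubgroup.closure_le _).mpr ?_ hf
  rintro _ ⟨a, m, hm, rfl⟩
  obtain rfl : m = 0 := funext fun i => by simpa using sum_eq_zero_iff.mp (Nat.le_zero.mp hm) i
  change Δ_[h] (binomialMonomial 0 a) = 0
  rw [binomialMonomial_zero, fwdDiff_const]
  rfl

variable [DecidableEq ι]

lemma fwdDiff_binomialMonomial (h : ι → ℤ) (m : ι → ℕ) (a : A) :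
    Δ_[h] (binomialMonomial m a) =
      ∑ p ∈ Iio m, binomialMonomial p ((∏ i, Ring.choose (h i) (m i - p i)) • a) := by
  funext x
  have vandermonde : ∏ i, Ring.choose (x i + h i) (m i) =
      ∑ p ∈ Iic m, (∏ i, Ring.choose (x i) (p i)) * ∏ i, Ring.choose (h i) (m i - p i) := by
    simp_rw [Ring.choose_add_eq_sum_Iic, prod_univ_sum, ← prod_mul_distrib]
    rfl
  rw [← Iio_insert, sum_insert (by simp)] at vandermonde
  simp only [fwdDiff, binomialMonomial, Pi.add_apply, vandermonde, Nat.sub_self,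
    Ring.choose_zero_right, prod_const_one, mul_one, add_smul, sum_smul, mul_smul,
    Finset.sum_apply, add_sub_cancel_left]

lemma fwdDiff_mem_binomialSpan (h : ι → ℤ) {k : ℕ} {f : (ι → ℤ) → A}
    (hf : f ∈ binomialSpan ι A (k + 1)) : Δ_[h] f ∈ binomialSpan ι A k := by
  change f ∈ (binomialSpan ι A k).comap (AddMonoidHom.mk' (fwdDiff h) (fwdDiff_add h))
  refine (AddSubgroup.closure_le _).mpr ?_ hf
  rintro _ ⟨a, m, hm, rfl⟩
  show Δ_[h] (binomialMonomial m a) ∈ binomialSpan ι A k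
  rw [fwdDiff_binomialMonomial]
  refine sum_mem fun p hp => binomialMonomial_mem_binomialSpan ?_ _
  have : ∑ i, p i < ∑ i, m i := by
    obtain ⟨hle, j, hj⟩ := Pi.lt_def.mp (mem_Iio.mp hp)
    exact sum_lt_sum (fun i _ => hle i) ⟨j, mem_univ j, hj⟩
  omega

lemma isPolyDegLe_of_mem_binomialSpan {k : ℕ} {f : (ι → ℤ) → A}
    (hf : f ∈ binomialSpan ι A k) : IsPolyDegLe k f := by
  induction k generalizing f with
  | zero => exact isPolyDegLe_zero_iff.mpr fun h => fwdDiff_eq_zero_of_mem_binomialSpan_zero h hf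
  | succ k ih => exact isPolyDegLe_succ_iff.mpr fun h => ih (fwdDiff_mem_binomialSpan h hf)

end BinomialSpan

section IndefiniteSum

variable {A : Type*} [AddCommGroup A]

/-- `∑_{0 ≤ t < x} u t`, extended to `x < 0` by `-∑_{x ≤ t < 0} u t` so that
`indefiniteSum u (x + 1) = indefiniteSum u x + u x` holds for every integer `x`. -/
noncomputable def indefiniteSum (u : ℤ → A) (x : ℤ) : A :=
  ∑ t ∈ Ico 0 x, u t - ∑ t ∈ Ico x 0, u t

lemma indefiniteSum_zero (u : ℤ → A) : indefiniteSum u 0 = 0 := by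
  simp [indefiniteSum]

lemma indefiniteSum_add_one (u : ℤ → A) (x : ℤ) :
    indefiniteSum u (x + 1) = indefiniteSum u x + u x := by
  rcases le_or_gt 0 x with hx | hx
  · rw [indefiniteSum, indefiniteSum, ← sum_Ico_add_eq_sum_Ico_add_one hx,
      Ico_eq_empty_of_le hx, Ico_eq_empty_of_le (by omega : (0 : ℤ) ≤ x + 1)]
    abel
  · rw [indefiniteSum, indefiniteSum, Ico_eq_empty_of_le hx.le,
      Ico_eq_empty_of_le (by omega : x + 1 ≤ 0), ← insert_Ico_add_one_left_eq_Ico hx,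
      sum_insert (by simp)]
    abel

lemma indefiniteSum_eq {u : ℤ → A} (F : ℤ → A) (h0 : F 0 = 0)
    (hF : ∀ x, F (x + 1) = F x + u x) : indefiniteSum u = F := by
  funext x
  induction x using Int.induction_on with
  | zero => rw [indefiniteSum_zero, h0]
  | succ x ih => rw [indefiniteSum_add_one, ih, hF]
  | pred x ih =>
    have h := hF (-x - 1)
    rw [sub_add_cancel, ← ih, ← sub_add_cancel (-(x : ℤ)) 1, indefiniteSum_add_one,
      sub_add_cancel] at h
    exact add_right_cancel h

lemma indefiniteSum_add (u v : ℤ → A) :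
    indefiniteSum (u + v) = indefiniteSum u + indefiniteSum v :=
  indefiniteSum_eq _ (by simp [indefiniteSum_zero])
    fun x => by simp only [Pi.add_apply, indefiniteSum_add_one]; abel

lemma indefiniteSum_fwdDiff (φ : ℤ → A) : indefiniteSum (Δ_[1] φ) = fun x => φ x - φ 0 :=
  indefiniteSum_eq _ (sub_self _) fun x => by simp only [fwdDiff]; abel

lemma indefiniteSum_choose_smul (q : ℕ) (b : A) :
    indefiniteSum (fun t => Ring.choose t q • b) = fun x => Ring.choose x (q + 1) • b :=
  indefiniteSum_eq _ (by rw [Ring.choose_zero_succ, zero_smul])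
    fun x => by rw [Ring.choose_succ_succ, add_smul, add_comm (Ring.choose x q • b)]

end IndefiniteSum

section Antidifference

variable {ι A : Type*} [DecidableEq ι] [AddCommGroup A]

omit [AddCommGroup A] in
lemma update_add_single {M : Type*} [AddZeroClass M] (x : ι → M) (i : ι) (t c : M) :
    update x i t + Pi.single i c = update x i (t + c) := by
  ext j
  by_cases hj : j = i
  · subst hj; simp
  · simp [hj]

noncomputable def antidiffAlong (i : ι) : ((ι → ℤ) → A) →+ ((ι → ℤ) → A) :=
  AddMonoidHom.mk' (fun g x => indefiniteSum (fun t => g (update x i t)) (x i))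
    fun _ _ => funext fun x => congrFun (indefiniteSum_add _ _) (x i)

lemma antidiffAlong_apply (i : ι) (g : (ι → ℤ) → A) (x : ι → ℤ) :
    antidiffAlong i g x = indefiniteSum (fun t => g (update x i t)) (x i) :=
  rfl

lemma eq_update_zero_add_antidiffAlong (F : (ι → ℤ) → A) (i : ι) (x : ι → ℤ) :
    F x = F (update x i 0) + antidiffAlong i (Δ_[Pi.single i 1] F) x := by
  have h : antidiffAlong i (Δ_[Pi.single i 1] F) x =
      indefiniteSum (Δ_[1] fun t => F (update x i t)) (x i) := by
    simp only [antidiffAlong_apply, fwdDiff, update_add_single]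
    rfl
  rw [h, indefiniteSum_fwdDiff]
  dsimp only
  rw [update_eq_self]
  abel

lemma indicator_insert_update_zero {M : Type*} [Zero M] {s : Finset ι} {i : ι} (hi : i ∉ s)
    (x : ι → M) :
    (↑(insert i s) : Set ι).indicator (update x i 0) = (↑s : Set ι).indicator x := by
  ext j
  by_cases hj : j = i
  · subst hj; simp [hi]
  · simp [Set.indicator_apply, hj]

variable [Fintype ι]

lemma antidiffAlong_binomialMonomial (i : ι) (m : ι → ℕ) (a : A) :
    antidiffAlong i (binomialMonomial m a) = binomialMonomial (update m i (m i + 1)) a := by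
  funext x
  set R := ∏ j ∈ {i}ᶜ, Ring.choose (x j) (m j)
  have split (y : ι → ℤ) (n : ι → ℕ) (hy : ∀ j ≠ i, y j = x j) (hn : ∀ j ≠ i, n j = m j) :
      (∏ j, Ring.choose (y j) (n j)) • a = Ring.choose (y i) (n i) • R • a := by
    rw [Fintype.prod_eq_mul_prod_compl i, mul_smul]
    congr 2
    exact prod_congr rfl fun j hj => by rw [hy j (by simpa using hj), hn j (by simpa using hj)]
  have hsummand (t : ℤ) :=
    split (update x i t) m (fun j hj => update_of_ne hj t x) (fun _ _ => rfl)
  have hresult := split x (update m i (m i + 1)) (fun _ _ => rfl) (fun j hj => update_of_ne hj _ m)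
  simp only [update_self] at hsummand hresult
  simp only [antidiffAlong_apply, binomialMonomial, hsummand, hresult,
    indefiniteSum_choose_smul]

lemma antidiffAlong_mem_binomialSpan (i : ι) {k : ℕ} {g : (ι → ℤ) → A}
    (hg : g ∈ binomialSpan ι A k) : antidiffAlong i g ∈ binomialSpan ι A (k + 1) := by
  change g ∈ (binomialSpan ι A (k + 1)).comap (antidiffAlong i)
  refine (AddSubgroup.closure_le _).mpr ?_ hg
  rintro _ ⟨a, m, hm, rfl⟩
  show antidiffAlong i (binomialMonomial m a) ∈ binomialSpan ι A (k + 1)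
  rw [antidiffAlong_binomialMonomial]
  refine binomialMonomial_mem_binomialSpan ?_ a
  rw [sum_update_of_mem (mem_univ i), sdiff_singleton_eq_erase]
  rw [← add_sum_erase _ _ (mem_univ i)] at hm
  omega

lemma mem_binomialSpan_of_forall_antidiffAlong_mem {k : ℕ}
    (hanti : ∀ F : (ι → ℤ) → A, IsPolyDegLe k F → ∀ i,
      antidiffAlong i (Δ_[Pi.single i 1] F) ∈ binomialSpan ι A k)
    {f : (ι → ℤ) → A} (hf : IsPolyDegLe k f) : f ∈ binomialSpan ι A k := by
  suffices ∀ s : Finset ι, (fun x => f ((s : Set ι).indicator x)) ∈ binomialSpan ι A k by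
    simpa using this univ
  intro s
  induction s using Finset.induction_on with
  | empty =>
    simp only [coe_empty, Set.indicator_empty]
    exact const_mem_binomialSpan k (f 0)
  | insert i s hi ih =>
    set F := fun x => f ((↑(insert i s) : Set ι).indicator x)
    have hF : F = (fun x => f ((s : Set ι).indicator x)) +
        antidiffAlong i (Δ_[Pi.single i 1] F) := by
      funext x
      rw [eq_update_zero_add_antidiffAlong F i x, Pi.add_apply]
      exact congrArg (f · + _) (indicator_insert_update_zero hi x)
    rw [hF]
    exact add_mem ih (hanti F (hf.comp_addMonoidHom (Set.indicatorHom ℤ _)) i)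

lemma mem_binomialSpan_of_isPolyDegLe {k : ℕ} {f : (ι → ℤ) → A} (hf : IsPolyDegLe k f) :
    f ∈ binomialSpan ι A k := by
  induction k generalizing f with
  | zero =>
    refine mem_binomialSpan_of_forall_antidiffAlong_mem (fun F hF i => ?_) hf
    rw [isPolyDegLe_zero_iff.mp hF, map_zero]
    exact zero_mem _
  | succ k ih =>
    refine mem_binomialSpan_of_forall_antidiffAlong_mem (fun F hF i => ?_) hf
    exact antidiffAlong_mem_binomialSpan i (ih (isPolyDegLe_succ_iff.mp hF _))

end Antidifference

theorem polyDegLe_iff_mem_binomial_span_general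
    {A : Type*} [AddCommGroup A] (n : ℕ) (k : ℕ)
    (f : (Fin n → ℤ) → A) :
    IsPolyDegLe k f ↔
      f ∈ AddSubgroup.closure
        {g : (Fin n → ℤ) → A | ∃ (a : A) (m : Fin n → ℕ), (∑ i, m i) ≤ k ∧
          g = fun x => (∏ i, Ring.choose (x i) (m i)) • a} :=
  ⟨mem_binomialSpan_of_isPolyDegLe, isPolyDegLe_of_mem_binomialSpan⟩

/-- a map `f : ℤⁿ → A` into an abelian group is a polynomial of degree at most
`k` if and only if it lies in the additive subgroup generated by the maps
`x ↦ (∏ᵢ binom(xᵢ, mᵢ)) • a` with `a ∈ A` and `∑ᵢ mᵢ ≤ k`, where `binom(x, m)` is the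
integer-valued binomial coefficient `x(x−1)⋯(x−m+1)/m!`. -/
theorem polyDegLe_iff_mem_binomial_span
    {A : Type*} [AddCommGroup A] (n : ℕ) (hn : 1 ≤ n) (k : ℕ)
    (f : (Fin n → ℤ) → A) :
    IsPolyDegLe k f ↔
      f ∈ AddSubgroup.closure
        {g : (Fin n → ℤ) → A | ∃ (a : A) (m : Fin n → ℕ), (∑ i, m i) ≤ k ∧
          g = fun x => (∏ i, Ring.choose (x i) (m i)) • a} :=
  polyDegLe_iff_mem_binomial_span_general n k f
end

section
/- Every continuous polynomial map of the circle to itself is linear: if f : ℝ/ℤ → ℝ/ℤ is continuous and there exists k ≥ 0 such that D_{h₀} D_{h₁} ⋯ D_{h_k} f = 0 for all h₀,…,h_k ∈ ℝ/ℤ, then there is a continuous additive group homomorphism φ : ℝ/ℤ → ℝ/ℤ such that f(x) = f(0) + φ(x) for all x. -/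
open scoped BigOperators

/-- every continuous polynomial map of the circle `ℝ/ℤ` to itself is linear:
if some `k+1` consecutive difference operators kill `f`, then `f(x) = f(0) + φ(x)` for a
continuous additive homomorphism `φ`. -/
theorem continuous_poly_circle_map_is_linear
    (f : AddCircle (1 : ℝ) → AddCircle (1 : ℝ)) (hf : Continuous f)
    (hpoly : ∃ k : ℕ, ∀ hs : Fin (k + 1) → AddCircle (1 : ℝ),
      (List.ofFn hs).foldr discDeriv f = fun _ => (0 : AddCircle (1 : ℝ))) :
    ∃ φ : AddCircle (1 : ℝ) →+ AddCircle (1 : ℝ), Continuous φ ∧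
      ∀ x, f x = f 0 + φ x := by
  have key : ∀ k : ℕ, ∀ f : AddCircle (1:ℝ) → AddCircle (1:ℝ), Continuous f →
      (∀ hs : Fin (k+1) → AddCircle (1:ℝ),
        (List.ofFn hs).foldr discDeriv f = fun _ => 0) →
      ∀ h x, f (x + h) - f x = f h - f 0 := by
    intro k
    induction k with
    | zero =>
        intro f hf hp h x
        have h1 : ∀ a b : AddCircle (1:ℝ), f (b + a) - f b = 0 := by
          intro a b
          have h2 := congrFun (hp fun _ => a) b
          simpa [discDeriv] using h2
        rw [h1 h x]
        have h3 := h1 h 0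
        rw [zero_add] at h3
        rw [h3]
    | succ k ih =>
        intro f hf hp
        have hd : ∀ h g x : AddCircle (1:ℝ),
            f (x + g + h) - f (x + g) - (f (x + h) - f x)
              = f (g + h) - f g - (f h - f 0) := by
          intro h g x
          have hcont : Continuous (discDeriv h f) :=
            (hf.comp (continuous_id.add continuous_const)).sub hf
          have hsub : ∀ hs : Fin (k+1) → AddCircle (1:ℝ),
              (List.ofFn hs).foldr discDeriv (discDeriv h f) = fun _ => 0 := by
            intro hs
            have h2 := hp (Fin.snoc hs h)
            rw [List.ofFn_succ'] at h2
            simp only [Fin.snoc_castSucc, Fin.snoc_last, List.concat_eq_append,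
              List.foldr_append, List.foldr] at h2
            exact h2
          have h3 := ih (discDeriv h f) hcont hsub g x
          simp only [discDeriv, zero_add] at h3
          exact h3
        -- B h x := f (x + h) - f x - (f h - f 0), biadditive and symmetric
        have Badd : ∀ h a b : AddCircle (1:ℝ),
            f (a + b + h) - f (a + b) - (f h - f 0)
              = (f (a + h) - f a - (f h - f 0)) + (f (b + h) - f b - (f h - f 0)) := by
          intro h a b
          have h1 := hd h b a
          rw [← sub_eq_zero] at h1 ⊢
          abel_nf at h1 ⊢
          exact h1
        have Bsymm : ∀ h x : AddCircle (1:ℝ),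
            f (x + h) - f x - (f h - f 0) = f (h + x) - f h - (f x - f 0) := by
          intro h x
          rw [add_comm x h]
          abel
        have Bn : ∀ (h x : AddCircle (1:ℝ)) (n : ℕ),
            f (n • x + h) - f (n • x) - (f h - f 0)
              = n • (f (x + h) - f x - (f h - f 0)) := by
          intro h x n
          induction n with
          | zero => simp
          | succ n ihn =>
              rw [succ_nsmul, Badd h (n • x) x, ihn, succ_nsmul]
        have Btors : ∀ (n : ℕ) (h x : AddCircle (1:ℝ)), 0 < n → n • h = 0 →
            f (x + h) - f x - (f h - f 0) = 0 := by
          intro n h x hn hh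
          obtain ⟨y, hy⟩ : ∃ y : AddCircle (1:ℝ), n • y = x := by
            induction x using QuotientAddGroup.induction_on with
            | H r =>
              refine ⟨((r / n : ℝ) : AddCircle (1:ℝ)), ?_⟩
              rw [← AddCircle.coe_nsmul]
              congr 1
              have hn' : (n:ℝ) ≠ 0 := Nat.cast_ne_zero.2 hn.ne'
              rw [nsmul_eq_mul]
              field_simp
          rw [← hy, Bn h y n]
          have h1 : f (h + y) - f h - (f y - f 0) = f (y + h) - f y - (f h - f 0) :=
            (Bsymm h y).symm
          have h2 : n • (f (y + h) - f y - (f h - f 0)) = 0 := by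
            rw [← h1, ← Bn y h n, hh]
            simp
          exact h2
        intro h x
        rw [← sub_eq_zero, show f (x + h) - f x - (f h - f 0)
          = (fun h => f (x + h) - f x - (f h - f 0)) h from rfl]
        have hcont1 : Continuous fun h : AddCircle (1:ℝ) =>
            f (x + h) - f x - (f h - f 0) := by
          fun_prop
        have hdense : Dense (Set.range fun q : ℚ => ((q : ℝ) : AddCircle (1:ℝ))) := by
          have h1 : DenseRange ((↑) : ℚ → ℝ) := Rat.denseRange_cast
          have h2 : DenseRange ((↑) : ℝ → AddCircle (1:ℝ)) :=
            Function.Surjective.denseRange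
              (fun x => QuotientAddGroup.induction_on x fun r => ⟨r, rfl⟩)
          exact h2.comp h1 (AddCircle.continuous_mk' (1:ℝ))
        have hzero : (fun h : AddCircle (1:ℝ) => f (x + h) - f x - (f h - f 0))
            = fun _ => 0 := by
          refine Continuous.ext_on hdense hcont1 continuous_const ?_
          rintro _ ⟨q, rfl⟩
          refine Btors q.den _ x q.pos ?_
          rw [← AddCircle.coe_nsmul]
          have hnum : q.den • (q : ℝ) = ((q.num : ℤ) : ℝ) := by
            rw [nsmul_eq_mul, mul_comm]
            exact_mod_cast Rat.mul_den_eq_num q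
          rw [hnum]
          exact (AddCircle.coe_eq_zero_iff (1:ℝ)).2 ⟨q.num, by simp⟩
        rw [hzero]
  obtain ⟨k, hk⟩ := hpoly
  have lin := key k f hf hk
  refine ⟨AddMonoidHom.mk' (fun x => f x - f 0) ?_, ?_, ?_⟩
  · intro a b
    have h1 := lin b a
    rw [← sub_eq_zero] at h1 ⊢
    abel_nf at h1 ⊢
    exact h1
  · exact hf.sub continuous_const
  · intro x
    simp
end

section
/- Let A be an abelian group, let 0 ≤ k ≤ n be integers, let S ⊆ {0,1}ⁿ be the k-dimensional face consisting of all vectors whose last n−k coordinates are 0, and let τ : {0,1}ⁿ → {0,1}^{n−k} be the projection to the last n−k coordinates. Let f : S → A be (the restriction to S of) a cube, and let φ : {0,1}^m → {0,1}ⁿ be a cube morphism such that τ∘φ is injective. Then for every cube c' : {0,1}^m → A satisfying c'(u) = f(φ(u)) for all u ∈ φ⁻¹(S), there exists a cube c : {0,1}ⁿ → A whose restriction to S equals f and with c∘φ = c'. -/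
open scoped BigOperators

/-- `c : {0,1}ⁿ → A` is a cube in the abelian group `A`:
`c(v) = x + v₁t₁ + ⋯ + v_n t_n` for some `x, t₁, …, t_n ∈ A`. -/
def IsCube {A : Type*} [AddCommGroup A] {n : ℕ} (c : (Fin n → Bool) → A) : Prop :=
  ∃ (x : A) (t : Fin n → A), ∀ v, c v = x + ∑ i, if v i then t i else 0

/-- `φ : {0,1}^m → {0,1}ⁿ` is a cube morphism: each coordinate function of `φ` is constant
`0`, constant `1`, a coordinate `vᵢ`, or a negated coordinate `1 − vᵢ`. -/
def IsCubeMorphism {m n : ℕ} (φ : (Fin m → Bool) → (Fin n → Bool)) : Prop :=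
  ∀ j : Fin n,
    (∀ v, φ v j = false) ∨ (∀ v, φ v j = true) ∨
      (∃ i : Fin m, ∀ v, φ v j = v i) ∨ (∃ i : Fin m, ∀ v, φ v j = !(v i))

/-! Cubes on `{0,1}ⁿ` form an additive subgroup, stable under precomposition with cube
morphisms, and a cube is determined by its values at one vertex `b` and at the neighbours of `b`.
Subtracting `c₀ ∘ φ` reduces the theorem to `f = 0`. Injectivity of `τ ∘ φ` forces every input
coordinate `j` to be copied, possibly negated, to a coordinate `σ j` in the set `T` of
coordinates kept by `τ`; let `b` be the input vertex at which all these copies are `0`. The lift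
is `e + ∑ⱼ qⱼ v_{σ j}`, where `e` vanishes on the face and takes the required value at `φ b`, and
`qⱼ` fixes the value at `φ` of the `j`-th neighbour of `b`, the only one of these points with
`v_{σ j} = 1`. -/

open Finset Function

section Cubes

variable {A : Type*} [AddCommGroup A] {m n : ℕ}

variable (A n) in
def cubeAddSubgroup : AddSubgroup ((Fin n → Bool) → A) where
  carrier := {c | IsCube c}
  zero_mem' := ⟨0, 0, by simp⟩
  add_mem' := by
    rintro c₁ c₂ ⟨x₁, t₁, h₁⟩ ⟨x₂, t₂, h₂⟩
    refine ⟨x₁ + x₂, t₁ + t₂, fun v => ?_⟩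
    simp only [Pi.add_apply, h₁, h₂, ite_add_zero, sum_add_distrib]
    abel
  neg_mem' := by
    rintro c ⟨x, t, h⟩
    refine ⟨-x, -t, fun v => ?_⟩
    simp only [Pi.neg_apply, h, neg_add, ← sum_neg_distrib, neg_ite, neg_zero]

theorem IsCube.add {c₁ c₂ : (Fin n → Bool) → A} (h₁ : IsCube c₁) (h₂ : IsCube c₂) :
    IsCube (c₁ + c₂) :=
  (cubeAddSubgroup A n).add_mem h₁ h₂

theorem IsCube.sub {c₁ c₂ : (Fin n → Bool) → A} (h₁ : IsCube c₁) (h₂ : IsCube c₂) :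
    IsCube (c₁ - c₂) :=
  (cubeAddSubgroup A n).sub_mem h₁ h₂

theorem IsCube.sum {ι : Type*} (s : Finset ι) {c : ι → (Fin n → Bool) → A}
    (h : ∀ i ∈ s, IsCube (c i)) : IsCube (∑ i ∈ s, c i) :=
  (cubeAddSubgroup A n).sum_mem h

theorem isCube_const (a : A) : IsCube fun _ : Fin n → Bool => a :=
  ⟨a, 0, by simp⟩

theorem isCube_ite_apply (i : Fin n) (a : A) :
    IsCube fun v : Fin n → Bool => if v i then a else 0 :=
  ⟨0, Pi.single i a, fun v => by
    rw [zero_add, sum_eq_single i (fun j _ h => by simp [h]) (by simp), Pi.single_eq_same]⟩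

theorem IsCube.comp_isCubeMorphism {c : (Fin n → Bool) → A}
    {φ : (Fin m → Bool) → (Fin n → Bool)} (hc : IsCube c) (hφ : IsCubeMorphism φ) :
    IsCube (c ∘ φ) := by
  obtain ⟨x, t, hct⟩ := hc
  have hcoord : ∀ i, IsCube fun u => if φ u i then t i else 0 := by
    intro i
    rcases hφ i with h | h | ⟨j, h⟩ | ⟨j, h⟩ <;> simp only [h]
    · exact isCube_const 0
    · exact isCube_const (t i)
    · exact isCube_ite_apply j (t i)
    · convert (isCube_const (t i)).sub (isCube_ite_apply j (t i)) using 1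
      ext u
      cases hu : u j <;> simp [hu]
  convert (isCube_const x).add (IsCube.sum univ fun i _ => hcoord i) using 1
  ext u
  simp [hct, Finset.sum_apply]

theorem IsCube.eq_zero_of_update_not {c : (Fin n → Bool) → A} (hc : IsCube c)
    (u₀ : Fin n → Bool) (h₀ : c u₀ = 0) (hflip : ∀ j, c (update u₀ j (!u₀ j)) = 0) : c = 0 := by
  obtain ⟨x, t, hct⟩ := hc
  have hupdate : ∀ j, c (update u₀ j (!u₀ j)) - c u₀ =
      (if !u₀ j then t j else 0) - (if u₀ j then t j else 0) := by
    intro j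
    rw [hct, hct, ← add_sum_erase _ _ (mem_univ j), ← add_sum_erase _ _ (mem_univ j),
      sum_congr rfl fun i hi => by rw [update_of_ne (ne_of_mem_erase hi)], update_self]
    abel
  have ht : t = 0 := funext fun j => by
    have := hupdate j
    rw [h₀, hflip j] at this
    cases hu : u₀ j <;> simp [hu] at this <;> simp [this]
  have hx : x = 0 := by simpa [ht] using (hct u₀).symm.trans h₀
  ext v
  simp [hct, ht, hx]

theorem IsCube.eq_of_eq_update_not {c₁ c₂ : (Fin n → Bool) → A} (h₁ : IsCube c₁)
    (h₂ : IsCube c₂) (u₀ : Fin n → Bool) (h₀ : c₁ u₀ = c₂ u₀)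
    (hflip : ∀ j, c₁ (update u₀ j (!u₀ j)) = c₂ (update u₀ j (!u₀ j))) : c₁ = c₂ :=
  sub_eq_zero.mp <| (h₁.sub h₂).eq_zero_of_update_not u₀ (by simp [h₀]) fun j => by simp [hflip j]

theorem IsCubeMorphism.exists_apply_eq_xor {φ : (Fin m → Bool) → (Fin n → Bool)}
    (hφ : IsCubeMorphism φ) (T : Set (Fin n))
    (hinj : ∀ v w, (∀ i ∈ T, φ v i = φ w i) → v = w) (j : Fin m) :
    ∃ i ∈ T, ∃ b, ∀ v, φ v i = (v j ^^ b) := by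
  by_contra! hnone
  have hfalse_eq_true := congrFun
    (hinj (fun _ => false) (update (fun _ => false) j true) fun i hi => ?_) j
  · simp at hfalse_eq_true
  rcases hφ i with h | h | ⟨j', h⟩ | ⟨j', h⟩
  · simp [h]
  · simp [h]
  · obtain rfl | hne := eq_or_ne j' j
    · obtain ⟨v, hv⟩ := hnone i hi false
      simp [h] at hv
    · simp [h, update_of_ne hne]
  · obtain rfl | hne := eq_or_ne j' j
    · obtain ⟨v, hv⟩ := hnone i hi true
      simp [h] at hv
    · simp [h, update_of_ne hne]

theorem exists_isCube_eq_zero_on_face_apply_eq (T : Set (Fin n)) (w : Fin n → Bool) (a : A)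
    (ha : (∀ i ∈ T, w i = false) → a = 0) :
    ∃ e : (Fin n → Bool) → A, IsCube e ∧ (∀ v, (∀ i ∈ T, v i = false) → e v = 0) ∧ e w = a := by
  by_cases hw : ∀ i ∈ T, w i = false
  · exact ⟨0, isCube_const 0, fun _ _ => rfl, (ha hw).symm⟩
  · push Not at hw
    obtain ⟨i, hi, hwi⟩ := hw
    exact ⟨fun v => if v i then a else 0, isCube_ite_apply i a, fun v hv => by simp [hv i hi],
      by simp [hwi]⟩

theorem IsCubeMorphism.exists_isCube_eq_zero_on_face_comp_eq
    {φ : (Fin m → Bool) → (Fin n → Bool)} (hφ : IsCubeMorphism φ) (T : Set (Fin n))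
    (hinj : ∀ v w, (∀ i ∈ T, φ v i = φ w i) → v = w) {d : (Fin m → Bool) → A} (hd : IsCube d)
    (hd₀ : ∀ u, (∀ i ∈ T, φ u i = false) → d u = 0) :
    ∃ h : (Fin n → Bool) → A, IsCube h ∧ (∀ v, (∀ i ∈ T, v i = false) → h v = 0) ∧ h ∘ φ = d := by
  choose σ hσT b hσ using hφ.exists_apply_eq_xor T hinj
  have hφ_update : ∀ j j', φ (update b j (!b j)) (σ j') = decide (j' = j) := by
    intro j j'
    by_cases hj : j' = j <;> simp [hσ, hj]
  obtain ⟨e, he, he₀, heb⟩ := exists_isCube_eq_zero_on_face_apply_eq T (φ b) (d b) (hd₀ b)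
  set q : Fin m → A := fun j => d (update b j (!b j)) - e (φ (update b j (!b j)))
  have hh : IsCube (e + ∑ j, fun v => if v (σ j) then q j else 0) :=
    he.add (IsCube.sum _ fun j _ => isCube_ite_apply (σ j) (q j))
  refine ⟨_, hh, fun v hv => by simp [he₀ v hv, hv _ (hσT _)], ?_⟩
  refine (hh.comp_isCubeMorphism hφ).eq_of_eq_update_not hd b ?_ fun j => ?_
  · simp [hσ, heb]
  · simp [hφ_update, q]

end Cubes

theorem cube_lifting_along_morphism_general
    {A : Type*} [AddCommGroup A] (n k m : ℕ)
    (f : (Fin n → Bool) → A)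
    (hf : ∃ c₀ : (Fin n → Bool) → A, IsCube c₀ ∧
      ∀ v : Fin n → Bool, (∀ i : Fin n, k ≤ (i : ℕ) → v i = false) → f v = c₀ v)
    (φ : (Fin m → Bool) → (Fin n → Bool)) (hφ : IsCubeMorphism φ)
    (hinj : ∀ v w : Fin m → Bool,
      (∀ i : Fin n, k ≤ (i : ℕ) → φ v i = φ w i) → v = w)
    (c' : (Fin m → Bool) → A) (hc' : IsCube c')
    (hagree : ∀ u : Fin m → Bool,
      (∀ i : Fin n, k ≤ (i : ℕ) → φ u i = false) → c' u = f (φ u)) :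
    ∃ c : (Fin n → Bool) → A, IsCube c ∧
      (∀ v : Fin n → Bool, (∀ i : Fin n, k ≤ (i : ℕ) → v i = false) → c v = f v) ∧
      ∀ u : Fin m → Bool, c (φ u) = c' u := by
  obtain ⟨c₀, hc₀, hfc₀⟩ := hf
  obtain ⟨h, hh, hh₀, hhφ⟩ := hφ.exists_isCube_eq_zero_on_face_comp_eq {i | k ≤ (i : ℕ)} hinj
    (hc'.sub (hc₀.comp_isCubeMorphism hφ)) fun u hu => by simp [hagree u hu, hfc₀ _ hu]
  refine ⟨c₀ + h, hc₀.add hh, fun v hv => by simp [hh₀ v hv, hfc₀ v hv], fun u => ?_⟩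
  rw [Pi.add_apply, ← comp_apply (f := h), hhφ, Pi.sub_apply, comp_apply, add_sub_cancel]

/-- let `S ⊆ {0,1}ⁿ` be the `k`-dimensional face of vectors whose last `n−k`
coordinates vanish, let `f` agree on `S` with a cube, and let `φ : {0,1}^m → {0,1}ⁿ` be a
cube morphism whose composition with the projection `τ` to the last `n−k` coordinates is
injective. Then every cube `c'` on `{0,1}^m` that agrees with `f∘φ` on `φ⁻¹(S)` lifts to a
cube `c` on `{0,1}ⁿ` restricting to `f` on `S` and satisfying `c∘φ = c'`. -/
theorem cube_lifting_along_morphism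
    {A : Type*} [AddCommGroup A] (n k m : ℕ) (hkn : k ≤ n)
    (f : (Fin n → Bool) → A)
    (hf : ∃ c₀ : (Fin n → Bool) → A, IsCube c₀ ∧
      ∀ v : Fin n → Bool, (∀ i : Fin n, k ≤ (i : ℕ) → v i = false) → f v = c₀ v)
    (φ : (Fin m → Bool) → (Fin n → Bool)) (hφ : IsCubeMorphism φ)
    (hinj : ∀ v w : Fin m → Bool,
      (∀ i : Fin n, k ≤ (i : ℕ) → φ v i = φ w i) → v = w)
    (c' : (Fin m → Bool) → A) (hc' : IsCube c')
    (hagree : ∀ u : Fin m → Bool,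
      (∀ i : Fin n, k ≤ (i : ℕ) → φ u i = false) → c' u = f (φ u)) :
    ∃ c : (Fin n → Bool) → A, IsCube c ∧
      (∀ v : Fin n → Bool, (∀ i : Fin n, k ≤ (i : ℕ) → v i = false) → c v = f v) ∧
      ∀ u : Fin m → Bool, c (φ u) = c' u :=
  cube_lifting_along_morphism_general n k m f hf φ hφ hinj c' hc' hagree
end

section
/- Let A be a compact Hausdorff second-countable abelian group with normalized Haar probability measure μ, and let ℬ be a sub-σ-algebra of the Borel σ-algebra of A that is shift invariant, i.e. S ∈ ℬ implies S + t ∈ ℬ for every t ∈ A. Let φ : A → ℂ be Borel measurable with |φ(x)| = 1 for all x, and suppose that for every t ∈ A the function x ↦ φ(x)·conj(φ(x+t)) is almost everywhere equal to a ℬ-measurable function. Then either the conditional expectation μ[φ | ℬ] is 0 almost everywhere, or φ is almost everywhere equal to a ℬ-measurable function. -/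
open MeasureTheory Filter
open scoped ComplexConjugate

/-!
Let `f = μ[φ|ℬ]` and let `g` be a `ℬ`-measurable version of `φ · conj φ(· + t)`, so that
`φ = g · φ(· + t)` because `|φ| = 1`. Since `ℬ` is shift invariant, conditional expectation
commutes with translation, and pulling out `g` gives `f = g · f(· + t)`. As `|g| = 1`, the
function `φ · conj f` is invariant under every translation, hence a.e. equal to a constant `d`
(Haar measure is ergodic for the translation action). Since `|φ| = 1` this means `f = conj d · φ`:
either `d = 0` and `f = 0`, or `φ = f / conj d` is `ℬ`-measurable.
-/

theorem ae_eq_const_of_forall_add_ae_eq {G E : Type*} [AddGroup G] {mG : MeasurableSpace G}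
    [MeasurableAdd₂ G] [MeasurableNeg G] {μ : Measure G} [SFinite μ] [μ.IsAddRightInvariant]
    [NeZero μ] [MeasurableSpace E] [MeasurableEq E] {h : G → E} (hh : Measurable h)
    (hinv : ∀ t, (fun x => h (x + t)) =ᵐ[μ] h) :
    ∃ c, h =ᵐ[μ] fun _ => c := by
  obtain ⟨x₀, hx₀⟩ : ∃ x₀, ∀ᵐ t ∂μ, h (x₀ + t) = h x₀ := by
    have hmeas : MeasurableSet {p : G × G | h (p.1 + p.2) = h p.1} :=
      measurableSet_eq_fun (hh.comp (measurable_fst.add measurable_snd)) (hh.comp measurable_fst)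
    exact ((Measure.ae_ae_comm hmeas).mpr (ae_of_all _ hinv)).exists
  refine ⟨h x₀, show ∀ᵐ x ∂μ, h x = h x₀ from ?_⟩
  simpa using (quasiMeasurePreserving_add_left μ (-x₀)).ae hx₀

section CondExp

variable {α E : Type*} {m m0 : MeasurableSpace α} {μ : Measure α}
  [NormedAddCommGroup E] [NormedSpace ℝ E] [CompleteSpace E]

theorem condExp_comp_ae_eq_of_measurePreserving (hm : m ≤ m0) [SigmaFinite (μ.trim hm)]
    {T : α → α} (hT : MeasurePreserving T μ μ) (hTemb : MeasurableEmbedding T)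
    (hTm : @Measurable α α m m T) (hTimage : ∀ s, MeasurableSet[m] s → MeasurableSet[m] (T '' s))
    {f : α → E} (hf : Integrable f μ) :
    μ[f|m] ∘ T =ᵐ[μ] μ[f ∘ T|m] := by
  have hcomp {g : α → E} (hg : Integrable g μ) : Integrable (g ∘ T) μ :=
    (hT.integrable_comp_emb hTemb).mpr hg
  refine ae_eq_condExp_of_forall_setIntegral_eq hm (hcomp hf)
    (fun s _ _ => (hcomp integrable_condExp).integrableOn) (fun s hs _ => ?_)
    (stronglyMeasurable_condExp.comp_measurable hTm).aestronglyMeasurable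
  have hpre : T ⁻¹' (T '' s) = s := hTemb.injective.preimage_image s
  calc ∫ x in s, μ[f|m] (T x) ∂μ = ∫ y in T '' s, μ[f|m] y ∂μ := by
        rw [← hT.setIntegral_preimage_emb hTemb _ (T '' s), hpre]
    _ = ∫ y in T '' s, f y ∂μ := setIntegral_condExp hm hf (hTimage s hs)
    _ = ∫ x in s, f (T x) ∂μ := by rw [← hT.setIntegral_preimage_emb hTemb _ (T '' s), hpre]

end CondExp

section ShiftInvariant

variable {G : Type*} [AddGroup G] {ℬ mG : MeasurableSpace G} [MeasurableAdd G]
  {μ : Measure G} [μ.IsAddRightInvariant]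

theorem condExp_comp_add_right_ae_eq {E : Type*} [NormedAddCommGroup E] [NormedSpace ℝ E]
    [CompleteSpace E] (hle : ℬ ≤ mG) [SigmaFinite (μ.trim hle)]
    (hinv : ∀ S : Set G, MeasurableSet[ℬ] S → ∀ t : G,
      MeasurableSet[ℬ] ((fun x => x + t) '' S))
    {f : G → E} (hf : Integrable f μ) (t : G) :
    (fun x => μ[f|ℬ] (x + t)) =ᵐ[μ] μ[fun x => f (x + t)|ℬ] := by
  refine condExp_comp_ae_eq_of_measurePreserving hle (measurePreserving_add_right μ t)
    (MeasurableEquiv.addRight t).measurableEmbedding (fun S hS => ?_) (fun S hS => hinv S hS t) hf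
  simpa [Set.image_add_right] using hinv S hS (-t)

theorem condExp_ae_eq_mul_condExp_comp_add_right {R : Type*} [NormedRing R] [NormedAlgebra ℝ R]
    [CompleteSpace R] (hle : ℬ ≤ mG) [SigmaFinite (μ.trim hle)]
    (hinv : ∀ S : Set G, MeasurableSet[ℬ] S → ∀ t : G,
      MeasurableSet[ℬ] ((fun x => x + t) '' S))
    {φ g : G → R} (hφ : Integrable φ μ) (hg : StronglyMeasurable[ℬ] g) {t : G}
    (hφg : φ =ᵐ[μ] fun x => g x * φ (x + t)) :
    μ[φ|ℬ] =ᵐ[μ] fun x => g x * μ[φ|ℬ] (x + t) := calc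
  μ[φ|ℬ] =ᵐ[μ] μ[fun x => g x * φ (x + t)|ℬ] := condExp_congr_ae hφg
  _ =ᵐ[μ] fun x => g x * μ[fun x => φ (x + t)|ℬ] x :=
    condExp_bilin_of_stronglyMeasurable_left (.mul ℝ R) hg ((integrable_congr hφg).mp hφ)
      (hφ.comp_add_right t)
  _ =ᵐ[μ] fun x => g x * μ[φ|ℬ] (x + t) := by
    filter_upwards [condExp_comp_add_right_ae_eq hle hinv hφ t] with x hx
    rw [hx]

end ShiftInvariant

theorem Complex.conj_mul_eq_one_of_norm_eq_one {z : ℂ} (hz : ‖z‖ = 1) : conj z * z = 1 := by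
  rw [Complex.conj_mul', hz]
  norm_num

theorem character_dichotomy_of_shift_invariant_general
    {A : Type*} [AddCommGroup A] [TopologicalSpace A] [IsTopologicalAddGroup A]
    [SecondCountableTopology A]
    [mA : MeasurableSpace A] [BorelSpace A]
    (μ : Measure A) [μ.IsAddHaarMeasure] [IsProbabilityMeasure μ]
    (ℬ : MeasurableSpace A) (hle : ℬ ≤ mA)
    (hinv : ∀ S : Set A, MeasurableSet[ℬ] S → ∀ t : A,
      MeasurableSet[ℬ] ((fun x => x + t) '' S))
    (φ : A → ℂ) (hmeas : Measurable[mA] φ) (hnorm : ∀ x, ‖φ x‖ = 1)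
    (hdiff : ∀ t : A, ∃ g : A → ℂ, Measurable[ℬ] g ∧
      (fun x => φ x * conj (φ (x + t))) =ᵐ[μ] g) :
    (@condExp A ℂ ℬ mA _ _ μ φ =ᵐ[μ] 0) ∨
      ∃ g : A → ℂ, Measurable[ℬ] g ∧ φ =ᵐ[μ] g := by
  have hφ : Integrable φ μ := .of_bound hmeas.aestronglyMeasurable 1 (ae_of_all _ (hnorm · |>.le))
  have hshift (t : A) :
      (fun x => φ (x + t) * conj (μ[φ|ℬ] (x + t))) =ᵐ[μ] fun x => φ x * conj (μ[φ|ℬ] x) := by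
    obtain ⟨g, hg, hφg⟩ := hdiff t
    have hφ_eq : φ =ᵐ[μ] fun x => g x * φ (x + t) := by
      filter_upwards [hφg] with x hx
      rw [← hx, mul_assoc, Complex.conj_mul_eq_one_of_norm_eq_one (hnorm _), mul_one]
    have hf_shift :=
      condExp_ae_eq_mul_condExp_comp_add_right hle hinv hφ hg.stronglyMeasurable hφ_eq
    filter_upwards [hφg, hφ_eq, hf_shift] with x hgx hφx hfx
    have hg_unit : conj (g x) * g x = 1 := Complex.conj_mul_eq_one_of_norm_eq_one <| by
      rw [← hgx, norm_mul, Complex.norm_conj, hnorm, hnorm, one_mul]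
    rw [hφx, hfx, map_mul]
    linear_combination -(φ (x + t) * conj (μ[φ|ℬ] (x + t))) * hg_unit
  have hf_meas : Measurable[mA] μ[φ|ℬ] := (stronglyMeasurable_condExp.mono hle).measurable
  obtain ⟨d, hd⟩ := ae_eq_const_of_forall_add_ae_eq (h := fun x => φ x * conj (μ[φ|ℬ] x))
    (hmeas.mul (Complex.continuous_conj.measurable.comp hf_meas)) hshift
  have hf_eq : μ[φ|ℬ] =ᵐ[μ] fun x => conj d * φ x := by
    filter_upwards [hd] with x hx
    rw [← hx, map_mul, Complex.conj_conj, mul_comm (conj (φ x)), mul_assoc,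
      Complex.conj_mul_eq_one_of_norm_eq_one (hnorm x), mul_one]
  rcases eq_or_ne d 0 with rfl | hd0
  · left
    filter_upwards [hf_eq] with x hx
    simp [hx]
  · right
    refine ⟨fun x => μ[φ|ℬ] x / conj d, stronglyMeasurable_condExp.measurable.div_const _, ?_⟩
    filter_upwards [hf_eq] with x hx
    rw [hx, mul_div_cancel_left₀ _ ((map_ne_zero _).mpr hd0)]

/-- let `ℬ` be a shift invariant sub-σ-algebra of the Borel σ-algebra of a
compact abelian group `A` and let `φ : A → ℂ` with `|φ| = 1` be Borel measurable such that
every difference function `x ↦ φ(x)·conj(φ(x+t))` is a.e. equal to a `ℬ`-measurable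
function. Then either `μ[φ|ℬ] = 0` a.e., or `φ` is a.e. equal to a `ℬ`-measurable
function. -/
theorem character_dichotomy_of_shift_invariant
    {A : Type*} [AddCommGroup A] [TopologicalSpace A] [IsTopologicalAddGroup A]
    [CompactSpace A] [T2Space A] [SecondCountableTopology A]
    [mA : MeasurableSpace A] [BorelSpace A]
    (μ : Measure A) [μ.IsAddHaarMeasure] [IsProbabilityMeasure μ]
    (ℬ : MeasurableSpace A) (hle : ℬ ≤ mA)
    (hinv : ∀ S : Set A, MeasurableSet[ℬ] S → ∀ t : A,
      MeasurableSet[ℬ] ((fun x => x + t) '' S))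
    (φ : A → ℂ) (hmeas : Measurable[mA] φ) (hnorm : ∀ x, ‖φ x‖ = 1)
    (hdiff : ∀ t : A, ∃ g : A → ℂ, Measurable[ℬ] g ∧
      (fun x => φ x * conj (φ (x + t))) =ᵐ[μ] g) :
    (@condExp A ℂ ℬ mA _ _ μ φ =ᵐ[μ] 0) ∨
      ∃ g : A → ℂ, Measurable[ℬ] g ∧ φ =ᵐ[μ] g :=
  character_dichotomy_of_shift_invariant_general (mA := mA) μ ℬ hle hinv φ hmeas hnorm hdiff
end

section
/- Let A₁ and A₂ be abelian groups with A₂ essentially torsion free, i.e. the set of elements of A₂ of finite order is countable. Let τ : A₁ → A₂ be a group homomorphism and let n ≥ 1 be an integer. If the image of the homomorphism x ↦ n·τ(x) is countable, then the image of τ is countable. (Equivalently, the quotient of Hom(A₁, A₂) by the subgroup of homomorphisms with countable image is torsion free.) -/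
/-- if `A₂` is essentially torsion free and `τ : A₁ → A₂` is a homomorphism
such that `x ↦ n·τ(x)` has countable image for some `n ≥ 1`, then `τ` has countable image
(i.e. `Hom(A₁,A₂)` modulo homomorphisms with countable image is torsion free). -/
theorem hom_countable_image_of_nsmul_countable_image
    {A₁ A₂ : Type*} [AddCommGroup A₁] [AddCommGroup A₂]
    (hA₂ : {a : A₂ | IsOfFinAddOrder a}.Countable)
    (τ : A₁ →+ A₂) (n : ℕ) (hn : 1 ≤ n)
    (h : (Set.range fun x => n • τ x).Countable) :
    (Set.range τ).Countable := by
  have hsub : Set.range τ ⊆ ⋃ y ∈ (Set.range fun x => n • τ x), {a : A₂ | n • a = y} := by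
    rintro a ⟨x, rfl⟩
    exact Set.mem_biUnion ⟨x, rfl⟩ rfl
  refine Set.Countable.mono hsub (Set.Countable.biUnion h ?_)
  intro y _
  rcases Set.eq_empty_or_nonempty {a : A₂ | n • a = y} with he | ⟨a₀, ha₀⟩
  · simp [he]
  · have : {a : A₂ | n • a = y} ⊆ (a₀ + ·) '' {a : A₂ | IsOfFinAddOrder a} := by
      intro a ha
      refine ⟨a - a₀, ?_, by simp⟩
      have : n • (a - a₀) = 0 := by
        rw [smul_sub, ha, ha₀, sub_self]
      exact isOfFinAddOrder_iff_nsmul_eq_zero.2 ⟨n, by omega, this⟩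
    exact Set.Countable.mono this (hA₂.image _)
end
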